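/- arXiv:quant-ph/0406046 — 8 statements merged into one kernel-verified Lean document; each statement's English description precedes it below -/
import Mathlib

section
/- Let G be a finite group, H ≤ G a nontrivial subgroup, and let C_1, …, C_k denote the non-identity conjugacy classes of G. Then D_H > Σ_{i=1}^k |C_i ∩ H|² · |H|^{-1} · |C_i|^{-1}. -/
open CategoryTheory Finset
open scoped Classical

/-- `D_H`: the total variation distance between the weak quantum Fourier sampling
distributions for the hidden subgroup `H` and for the trivial subgroup, namely
`(1/|G|) · Σ_ρ d_ρ · |Σ_{h ∈ H, h ≠ e} χ_ρ(h)|`, where `ρ` runs over the family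
of irreducible representations. -/
noncomputable def weakDist {G : Type} [Group G] [Fintype G] {ι : Type} [Fintype ι]
    (ρ : ι → FDRep ℂ G) (H : Subgroup G) : ℝ :=
  (Fintype.card G : ℝ)⁻¹ *
    ∑ i : ι, (Module.finrank ℂ (ρ i) : ℝ) *
      ‖∑ h ∈ Finset.univ.filter (fun h : G => h ∈ H ∧ h ≠ 1), (ρ i).character h‖

/-- `ρ : ι → FDRep ℂ G` is a complete family of pairwise non-isomorphic irreducible
complex representations of `G` (one per isomorphism class). -/
def IsCompleteIrrepFamily {G : Type} [Group G] {ι : Type} (ρ : ι → FDRep ℂ G) : Prop :=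
  (∀ i, Simple (ρ i)) ∧
  (∀ i j, Nonempty (ρ i ≅ ρ j) → i = j) ∧
  (∀ V : FDRep ℂ G, Simple V → ∃ i, Nonempty (ρ i ≅ V))

namespace WQFS

open Module Polynomial

variable {G : Type} [Group G] [Fintype G]

/-! ### Bound on character values -/

lemma char_abs_le (V : FDRep ℂ G) (g : G) :
    ‖V.character g‖ ≤ (finrank ℂ V : ℝ) := by
  classical
  set n := Fintype.card G with hn
  have hn0 : n ≠ 0 := Fintype.card_ne_zero
  set b := Module.finBasis ℂ V with hb
  set M : Matrix _ _ ℂ := LinearMap.toMatrixAlgEquiv b (V.ρ g) with hM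
  have hMn : M ^ n = 1 := by
    rw [hM, ← map_pow, ← map_pow, pow_card_eq_one, map_one, map_one]
  have hroot : ∀ μ ∈ M.charpoly.roots, ‖μ‖ = 1 := by
    intro μ hμ
    have hne : M.charpoly ≠ 0 := (Matrix.charpoly_monic M).ne_zero
    have heval : Polynomial.eval μ M.charpoly = 0 := (Polynomial.mem_roots hne).mp hμ
    have hdet : (Matrix.scalar _ μ - M).det = 0 := by
      have h1 := eval_det (Matrix.charmatrix M) μ
      rw [Matrix.charpoly] at heval
      rw [heval] at h1
      rw [Matrix.matPolyEquiv_charmatrix] at h1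
      simpa using h1.symm
    have hcomm : Commute (Matrix.scalar _ μ) M :=
      Matrix.scalar_commute μ (fun r' => Commute.all μ r') M
    obtain ⟨B, hB⟩ := hcomm.sub_dvd_pow_sub_pow n
    have h2 : (Matrix.scalar (Fin (finrank ℂ V)) (μ ^ n - 1)) = (Matrix.scalar (Fin (finrank ℂ V)) μ) ^ n - M ^ n := by
      rw [hMn, ← map_pow, map_sub, map_one]
    have h3 : ((μ : ℂ) ^ n - 1) ^ finrank ℂ V = 0 := by
      have h4 : (Matrix.scalar (Fin (finrank ℂ V)) (μ ^ n - 1)).det = 0 := by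
        rw [h2, hB, Matrix.det_mul, hdet, zero_mul]
      have h5 : (Matrix.scalar (Fin (finrank ℂ V)) (μ ^ n - 1) : Matrix _ _ ℂ)
          = (μ ^ n - 1) • (1 : Matrix _ _ ℂ) := by
        ext i j
        by_cases hij : i = j <;>
          simp [Matrix.scalar_apply, Matrix.diagonal, Matrix.one_apply, hij]
      rw [h5, Matrix.det_smul, Matrix.det_one, mul_one, Fintype.card_fin] at h4
      exact h4
    have h6 : (μ : ℂ) ^ n = 1 := by
      have hd0 : finrank ℂ V ≠ 0 := by
        intro hd
        have hdeg : M.charpoly.natDegree = 0 := by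
          rw [Matrix.charpoly_natDegree_eq_dim, Fintype.card_fin, hd]
        have hcard := Polynomial.card_roots' M.charpoly
        rw [hdeg, Nat.le_zero] at hcard
        rw [Multiset.card_eq_zero.mp hcard] at hμ
        exact absurd hμ (Multiset.notMem_zero μ)
      exact sub_eq_zero.mp ((pow_eq_zero_iff hd0).mp h3)
    have h7 : ‖μ‖ ^ n = 1 := by rw [← norm_pow, h6, norm_one]
    rcases lt_trichotomy (‖μ‖) 1 with h | h | h
    · exact absurd h7 (ne_of_lt (pow_lt_one₀ (norm_nonneg μ) h hn0))
    · exact h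
    · exact absurd h7 (ne_of_gt (one_lt_pow₀ h hn0))
  have htr : V.character g = M.trace := by
    rw [show V.character g = LinearMap.trace ℂ V (V.ρ g) from rfl,
        LinearMap.trace_eq_matrix_trace ℂ b (V.ρ g)]
    rfl
  have hcard : Multiset.card M.charpoly.roots = finrank ℂ V := by
    rw [Polynomial.splits_iff_card_roots.mp (IsAlgClosed.splits M.charpoly),
        Matrix.charpoly_natDegree_eq_dim, Fintype.card_fin]
  have hrepl : M.charpoly.roots.map (fun x => ‖x‖)
      = Multiset.replicate (finrank ℂ V) 1 := by
    refine Multiset.eq_replicate.mpr ⟨by rw [Multiset.card_map, hcard], ?_⟩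
    intro x hx
    obtain ⟨μ, hμ, rfl⟩ := Multiset.mem_map.mp hx
    exact hroot μ hμ
  rw [htr, Matrix.trace_eq_sum_roots_charpoly]
  calc ‖M.charpoly.roots.sum‖ ≤ (M.charpoly.roots.map (fun x => ‖x‖)).sum := by
        simpa using norm_multiset_sum_le M.charpoly.roots
    _ = (finrank ℂ V : ℝ) := by rw [hrepl, Multiset.sum_replicate, nsmul_eq_mul, mul_one]


set_option linter.unusedSectionVars false

noncomputable def convOp (f : G → ℂ) (V : FDRep ℂ G) : (V : Type) →ₗ[ℂ] V :=
  ∑ g : G, f g • (V.ρ g⁻¹ : (V : Type) →ₗ[ℂ] V)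

def IsClassFn (f : G → ℂ) : Prop := ∀ g x : G, f (g * x * g⁻¹) = f x

lemma convOp_apply (f : G → ℂ) (V : FDRep ℂ G) (v : V) :
    convOp f V v = ∑ g : G, f g • (V.ρ g⁻¹ v) := by
  simp [convOp, LinearMap.sum_apply]

lemma convOp_comm_apply (f : G → ℂ) (hf : IsClassFn f) (V : FDRep ℂ G) (h : G) (v : V) :
    convOp f V (V.ρ h v) = V.ρ h (convOp f V v) := by
  rw [convOp_apply, convOp_apply, map_sum]
  have key : ∀ a b : G, V.ρ a (V.ρ b v) = V.ρ (a * b) v := by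
    intro a b; rw [map_mul]; rfl
  refine Fintype.sum_equiv ⟨fun x => h⁻¹ * x * h, fun y => h * y * h⁻¹,
      fun x => by group, fun y => by group⟩ _ _ ?_
  intro x
  simp only [Equiv.coe_fn_mk, map_smul]
  rw [key, key, show h * (h⁻¹ * x * h)⁻¹ = x⁻¹ * h by group,
    show f (h⁻¹ * x * h) = f x from by simpa using hf h⁻¹ x]

lemma convOp_comm (f : G → ℂ) (hf : IsClassFn f) (V : FDRep ℂ G) (h : G) :
    convOp f V ∘ₗ (V.ρ h : (V : Type) →ₗ[ℂ] V) = V.ρ h ∘ₗ convOp f V :=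
  LinearMap.ext fun v => convOp_comm_apply f hf V h v

noncomputable def convHom (f : G → ℂ) (hf : IsClassFn f) (V : FDRep ℂ G) : V ⟶ V :=
  ⟨FGModuleCat.ofHom (convOp f V), fun h => by ext v; exact convOp_comm_apply f hf V h v⟩

lemma hom_comm_apply' {V W : FDRep ℂ G} (φ : V ⟶ W) (g : G) (v : V) :
    φ.hom (V.ρ g v) = W.ρ g (φ.hom v) :=
  congrArg (fun k => k.hom.hom v) (φ.comm g)

lemma convHom_hom (f : G → ℂ) (hf : IsClassFn f) (V : FDRep ℂ G) :
    (convHom f hf V).hom.hom.hom = convOp f V := rfl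

set_option linter.unusedSectionVars false

lemma trace_convOp (f : G → ℂ) (V : FDRep ℂ G) :
    LinearMap.trace ℂ V (convOp f V) = ∑ g : G, f g * V.character g⁻¹ := by
  rw [convOp, map_sum]
  refine Finset.sum_congr rfl fun g _ => ?_
  rw [map_smul, smul_eq_mul]
  rfl

lemma convOp_eq_zero_of_simple (f : G → ℂ) (hf : IsClassFn f) (V : FDRep ℂ G) [Simple V]
    (h0 : ∑ g : G, f g * V.character g⁻¹ = 0) : convOp f V = 0 := by
  have hrk : finrank ℂ (V ⟶ V) = 1 := by
    rw [FDRep.finrank_hom_simple_simple V V, if_pos ⟨Iso.refl V⟩]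
  have hid : (𝟙 V : V ⟶ V) ≠ 0 := id_nonzero V
  obtain ⟨c, hc⟩ := (finrank_eq_one_iff_of_nonzero' (𝟙 V) hid).mp hrk (convHom f hf V)
  have hnt : Nontrivial (V : Type) := by
    by_contra hn
    have hsub : Subsingleton (V : Type) := not_nontrivial_iff_subsingleton.mp hn
    have hss : Subsingleton ((V : Type) →ₗ[ℂ] (V : Type)) := inferInstance
    exact hid (by ext v; exact Subsingleton.elim _ _)
  have hd : (finrank ℂ (V : Type) : ℂ) ≠ 0 := by
    have := Module.finrank_pos (R := ℂ) (M := (V : Type))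
    exact Nat.cast_ne_zero.mpr this.ne'
  have htr : LinearMap.trace ℂ V ((convHom f hf V).hom.hom.hom) = c * finrank ℂ (V : Type) := by
    rw [← hc]
    have : ((c • 𝟙 V : V ⟶ V)).hom.hom.hom = c • LinearMap.id (M := (V : Type)) := rfl
    rw [this, map_smul, smul_eq_mul, LinearMap.trace_id]
  have hc0 : c = 0 := by
    have h1 : c * finrank ℂ (V : Type) = 0 := by
      rw [← htr, convHom_hom, trace_convOp, h0]
    rcases mul_eq_zero.mp h1 with h | h
    · exact h
    · exact absurd h hd
  have : convHom f hf V = 0 := by rw [← hc, hc0, zero_smul]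
  calc convOp f V = (convHom f hf V).hom.hom.hom := rfl
    _ = (0 : V ⟶ V).hom.hom.hom := by rw [this]
    _ = 0 := rfl

/-! ### invariant subspaces -/

def IsInvt (V : FDRep ℂ G) (U : Submodule ℂ (V : Type)) : Prop :=
  ∀ (g : G), ∀ u ∈ U, V.ρ g u ∈ U

noncomputable def resRep (V : FDRep ℂ G) (U : Submodule ℂ (V : Type)) (hU : IsInvt V U) :
    Representation ℂ G U where
  toFun g := (V.ρ g).restrict (fun u hu => hU g u hu)
  map_one' := by ext u; simp [LinearMap.restrict_apply]
  map_mul' g h := by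
    ext u
    simp [LinearMap.restrict_apply]

noncomputable def subRep (V : FDRep ℂ G) (U : Submodule ℂ (V : Type)) (hU : IsInvt V U) :
    FDRep ℂ G :=
  FDRep.of (resRep V U hU)

noncomputable def subIncl (V : FDRep ℂ G) (U : Submodule ℂ (V : Type)) (hU : IsInvt V U) :
    (subRep V U hU : Type) →ₗ[ℂ] (V : Type) := U.subtype

lemma subIncl_injective (V : FDRep ℂ G) (U : Submodule ℂ (V : Type)) (hU : IsInvt V U) :
    Function.Injective (subIncl V U hU) := Subtype.val_injective

lemma subRep_ρ_apply (V : FDRep ℂ G) (U : Submodule ℂ (V : Type)) (hU : IsInvt V U)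
    (g : G) (u : (subRep V U hU : Type)) :
    subIncl V U hU ((subRep V U hU).ρ g u) = V.ρ g (subIncl V U hU u) := rfl

lemma convOp_subRep_apply (f : G → ℂ) (V : FDRep ℂ G) (U : Submodule ℂ (V : Type))
    (hU : IsInvt V U) (u : (subRep V U hU : Type)) :
    subIncl V U hU (convOp f (subRep V U hU) u) = convOp f V (subIncl V U hU u) := by
  rw [convOp_apply, convOp_apply, map_sum]
  refine Finset.sum_congr rfl fun g _ => ?_
  rw [map_smul]
  rfl

lemma isInvt_ker {V W : FDRep ℂ G} (φ : V ⟶ W) : IsInvt V (LinearMap.ker φ.hom.hom.hom) := by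
  intro g u hu
  have hu' : φ.hom u = 0 := hu
  have h1 : φ.hom (V.ρ g u) = W.ρ g (φ.hom u) := hom_comm_apply' φ g u
  show φ.hom (V.ρ g u) = 0
  rw [h1, hu', map_zero]

lemma isInvt_range {V W : FDRep ℂ G} (φ : V ⟶ W) : IsInvt W (LinearMap.range φ.hom.hom.hom) := by
  intro g u hu
  obtain ⟨v, rfl⟩ := hu
  exact ⟨V.ρ g v, (hom_comm_apply' φ g v)⟩

lemma simple_of_invt (W : FDRep ℂ G) (hnt : Nontrivial (W : Type))
    (hirr : ∀ U : Submodule ℂ (W : Type), IsInvt W U → U = ⊥ ∨ U = ⊤) : Simple W := by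
  constructor
  intro Y f hmono
  constructor
  · intro hiso hzero
    have h1 : 𝟙 W = 0 := by
      have ha : 𝟙 W = inv f ≫ f := (IsIso.inv_hom_id f).symm
      have hb : inv f ≫ f = inv f ≫ 0 := congrArg (fun φ => inv f ≫ φ) hzero
      rw [Limits.comp_zero] at hb
      exact ha.trans hb
    obtain ⟨x, y, hxy⟩ := hnt
    apply hxy
    have h2 : ∀ z : (W : Type), z = 0 := by
      intro z
      have h3 : (𝟙 W : W ⟶ W).hom z = (0 : W ⟶ W).hom z := by rw [h1]
      simp at h3; exact h3
    rw [h2 x, h2 y]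
  · intro hne
    have hker : LinearMap.ker f.hom.hom.hom = ⊥ := by
      have hkinv := isInvt_ker f
      let ι : subRep Y _ hkinv ⟶ Y := ⟨FGModuleCat.ofHom (subIncl Y _ hkinv), fun g => by ext u; rfl⟩
      have hcomp : ι ≫ f = (0 : subRep Y _ hkinv ⟶ Y) ≫ f := by
        ext u
        have hu : f.hom (subIncl Y _ hkinv u) = 0 := u.2
        simp [Action.comp_hom]; exact hu
      have hι0 : ι = 0 := (cancel_mono f).mp hcomp
      rw [eq_bot_iff]
      intro x hx
      have hval : (0 : subRep Y _ hkinv ⟶ Y).hom ⟨x, hx⟩ = x := by rw [← hι0]; rfl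
      have hx0 : x = 0 := by simp at hval; exact hval.symm
      simp [hx0]
    have hrange : LinearMap.range f.hom.hom.hom = ⊤ := by
      rcases hirr (LinearMap.range f.hom.hom.hom) (isInvt_range f) with h | h
      · exfalso
        apply hne
        ext v
        have hmem : f.hom v ∈ LinearMap.range f.hom.hom.hom := ⟨v, rfl⟩
        rw [h] at hmem
        simp at hmem ⊢; exact hmem
      · exact h
    let e := LinearEquiv.ofBijective f.hom.hom.hom ⟨LinearMap.ker_eq_bot.mp hker, LinearMap.range_eq_top.mp hrange⟩
    have hsymm_comm : ∀ (g : G) (w : (W : Type)),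
        e.symm (W.ρ g w) = Y.ρ g (e.symm w) := by
      intro g w
      apply e.injective
      rw [e.apply_symm_apply]
      have h4 : e (Y.ρ g (e.symm w)) = f.hom (Y.ρ g (e.symm w)) := rfl
      rw [h4, hom_comm_apply' f g (e.symm w)]
      congr 1
      exact (e.apply_symm_apply w).symm
    refine ⟨⟨⟨FGModuleCat.ofHom e.symm.toLinearMap, fun g => by ext w; exact hsymm_comm g w⟩, ?_, ?_⟩⟩
    · ext y
      show e.symm (f.hom y) = y
      exact e.symm_apply_apply y
    · ext w
      show f.hom (e.symm w) = w
      exact e.apply_symm_apply w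

lemma exists_minimal_invt (V : FDRep ℂ G) (U₀ : Submodule ℂ (V : Type)) (h0 : U₀ ≠ ⊥)
    (hU₀ : IsInvt V U₀) :
    ∃ U, U ≤ U₀ ∧ IsInvt V U ∧ U ≠ ⊥ ∧
      ∀ U', U' ≤ U → IsInvt V U' → U' ≠ ⊥ → U' = U := by
  have hex : ∃ n, ∃ U : Submodule ℂ (V : Type),
      (U ≤ U₀ ∧ IsInvt V U ∧ U ≠ ⊥) ∧ finrank ℂ U = n := ⟨_, U₀, ⟨le_rfl, hU₀, h0⟩, rfl⟩
  obtain ⟨U, hU, hUn⟩ := Nat.find_spec hex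
  refine ⟨U, hU.1, hU.2.1, hU.2.2, fun U' hle hinv hne => ?_⟩
  by_contra hne'
  have hlt : finrank ℂ U' < finrank ℂ U :=
    Submodule.finrank_lt_finrank_of_lt (lt_of_le_of_ne hle hne')
  rw [hUn] at hlt
  exact Nat.find_min hex hlt ⟨U', ⟨hle.trans hU.1, hinv, hne⟩, rfl⟩

lemma exists_invt_compl (V : FDRep ℂ G) (Z : Submodule ℂ (V : Type)) (hZ : IsInvt V Z) :
    ∃ Z', IsInvt V Z' ∧ IsCompl Z Z' := by
  obtain ⟨W₀, hW₀⟩ := Submodule.exists_isCompl Z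
  set π₀ := Z.projectionOnto W₀ hW₀ with hπ₀
  set q : (V : Type) →ₗ[ℂ] (V : Type) := Z.subtype.comp π₀ with hq
  have hqmem : ∀ v, q v ∈ Z := fun v => (π₀ v).2
  have hqid : ∀ v ∈ Z, q v = v := by
    intro v hv
    show (Z.subtype) (π₀ v) = v
    rw [show v = ((⟨v, hv⟩ : Z) : (V : Type)) from rfl, Submodule.projectionOnto_apply_left hW₀]
    rfl
  set p : (V : Type) →ₗ[ℂ] (V : Type) :=
    (Fintype.card G : ℂ)⁻¹ • ∑ g : G,
      ((V.ρ g⁻¹ : (V : Type) →ₗ[ℂ] V).comp (q.comp (V.ρ g : (V : Type) →ₗ[ℂ] V))) with hp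
  have hcard0 : (Fintype.card G : ℂ) ≠ 0 := Nat.cast_ne_zero.mpr Fintype.card_ne_zero
  have hkey : ∀ a b : G, ∀ v : (V : Type), V.ρ a (V.ρ b v) = V.ρ (a * b) v := by
    intro a b v; rw [map_mul]; rfl
  have hpmem : ∀ v, p v ∈ Z := by
    intro v
    rw [hp]
    simp only [LinearMap.smul_apply, LinearMap.sum_apply, LinearMap.comp_apply]
    refine Submodule.smul_mem Z _ (Submodule.sum_mem Z fun g _ => ?_)
    exact hZ g⁻¹ _ (hqmem _)
  have hpid : ∀ v ∈ Z, p v = v := by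
    intro v hv
    rw [hp]
    simp only [LinearMap.smul_apply, LinearMap.sum_apply, LinearMap.comp_apply]
    have hterm : ∀ g : G, V.ρ g⁻¹ (q (V.ρ g v)) = v := by
      intro g
      rw [hqid _ (hZ g v hv), hkey, inv_mul_cancel, map_one]
      rfl
    rw [Finset.sum_congr rfl fun g _ => hterm g, Finset.sum_const, Finset.card_univ,
      ← Nat.cast_smul_eq_nsmul ℂ, smul_smul, inv_mul_cancel₀ hcard0, one_smul]
  have hpcomm : ∀ (h : G) (v : (V : Type)), p (V.ρ h v) = V.ρ h (p v) := by
    intro h v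
    rw [hp]
    simp only [LinearMap.smul_apply, LinearMap.sum_apply, LinearMap.comp_apply]
    rw [map_smul, map_sum]
    congr 1
    refine Fintype.sum_equiv (Equiv.mulRight h) _ _ ?_
    intro x
    simp only [Equiv.coe_mulRight]
    rw [hkey x h v, hkey h (x * h)⁻¹, show h * (x * h)⁻¹ = x⁻¹ by group]
  set π : (V : Type) →ₗ[ℂ] Z := LinearMap.codRestrict Z p hpmem with hπ
  have hπid : ∀ x : Z, π (x : (V : Type)) = x := by
    intro x
    apply Subtype.ext
    exact hpid x x.2
  refine ⟨LinearMap.ker π, ?_, LinearMap.isCompl_of_proj hπid⟩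
  intro g u hu
  rw [LinearMap.mem_ker] at hu ⊢
  apply Subtype.ext
  have hval : (π ((V.ρ g) u) : (V : Type)) = p (V.ρ g u) := rfl
  have hu0 : p u = 0 := congrArg Subtype.val hu
  rw [hval, hpcomm, hu0, map_zero]
  rfl

lemma convOp_eq_zero_of_complete {ι : Type} (ρ : ι → FDRep ℂ G) (hρ : IsCompleteIrrepFamily ρ)
    (f : G → ℂ) (hf : IsClassFn f)
    (h0 : ∀ i, ∑ g : G, f g * (ρ i).character g⁻¹ = 0) (V : FDRep ℂ G) :
    convOp f V = 0 := by
  have hsimple : ∀ W : FDRep ℂ G, Simple W → convOp f W = 0 := by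
    intro W hW
    obtain ⟨i, ⟨e⟩⟩ := hρ.2.2 W hW
    have hchar : W.character = (ρ i).character := (FDRep.char_iso e).symm
    have h0W : ∑ g : G, f g * W.character g⁻¹ = 0 := by rw [hchar]; exact h0 i
    exact @convOp_eq_zero_of_simple G _ _ f hf W hW h0W
  set T := convOp f V with hT
  set Z := LinearMap.ker T with hZdef
  have hZinv : IsInvt V Z := by
    intro g u hu
    have hu' : T u = 0 := hu
    show T (V.ρ g u) = 0
    rw [hT, convOp_comm_apply f hf V g u, ← hT, hu', map_zero]
  obtain ⟨Z', hZ'inv, hcompl⟩ := exists_invt_compl V Z hZinv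
  have hZ'bot : Z' = ⊥ := by
    by_contra hne
    obtain ⟨U, hUle, hUinv, hUne, hUmin⟩ := exists_minimal_invt V Z' hne hZ'inv
    have hnt : Nontrivial U := Submodule.nontrivial_iff_ne_bot.mpr hUne
    have hsimp : Simple (subRep V U hUinv) := by
      apply simple_of_invt _ hnt
      intro U' hU'inv
      set U'' := U'.map (subIncl V U hUinv) with hU''def
      have hinj : Function.Injective (subIncl V U hUinv) := subIncl_injective V U hUinv
      have hU''inv : IsInvt V U'' := by
        intro g u hu
        obtain ⟨x, hx, rfl⟩ := hu
        exact ⟨(subRep V U hUinv).ρ g x, hU'inv g x hx, (subRep_ρ_apply V U hUinv g x).symm ▸ rfl⟩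
      have hU''le : U'' ≤ U := by
        rintro _ ⟨x, hx, rfl⟩
        exact x.2
      rcases eq_or_ne U'' ⊥ with hb | hb
      · left
        rw [eq_bot_iff]
        intro x hx
        have hmem : subIncl V U hUinv x ∈ U'' := ⟨x, hx, rfl⟩
        rw [hb] at hmem
        have hx0 : subIncl V U hUinv x = 0 := hmem
        have : x = 0 := hinj (by rw [hx0]; exact (map_zero _).symm)
        simp [this]
      · right
        have hUeq : U'' = U := hUmin U'' hU''le hU''inv hb
        have htop : U'.map (subIncl V U hUinv) = (⊤ : Submodule ℂ (subRep V U hUinv : Type)).map (subIncl V U hUinv) := by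
          rw [Submodule.map_top, ← hU''def, hUeq]
          exact (Submodule.range_subtype U).symm
        exact Submodule.map_injective_of_injective hinj htop
    have hzero := hsimple _ hsimp
    have hUZ : U ≤ Z := by
      intro u hu
      show T u = 0
      have h5 := convOp_subRep_apply f V U hUinv ⟨u, hu⟩
      rw [hzero] at h5
      exact h5.symm.trans (map_zero (subIncl V U hUinv))
    have hUbot : U ≤ ⊥ := by
      rw [← hcompl.inf_eq_bot]
      exact le_inf hUZ hUle
    exact hUne (le_bot_iff.mp hUbot)
  have hZtop : Z = ⊤ := by
    have := hcompl.sup_eq_top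
    rwa [hZ'bot, sup_bot_eq] at this
  apply LinearMap.ext
  intro v
  have hv : v ∈ Z := hZtop ▸ Submodule.mem_top
  exact hv

lemma classFn_eq_zero {ι : Type} (ρ : ι → FDRep ℂ G) (hρ : IsCompleteIrrepFamily ρ)
    (f : G → ℂ) (hf : IsClassFn f)
    (h0 : ∀ i, ∑ g : G, f g * (ρ i).character g⁻¹ = 0) : ∀ x, f x = 0 := by
  intro x
  set R : FDRep ℂ G := FDRep.of (Representation.ofMulAction ℂ G G) with hR
  have h := convOp_eq_zero_of_complete ρ hρ f hf h0 R
  have h1 : convOp f R (MonoidAlgebra.single (1 : G) (1 : ℂ)) = 0 := by rw [h]; rfl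
  rw [convOp_apply] at h1
  have h2 : ∀ g : G, (R.ρ g⁻¹) (MonoidAlgebra.single (1 : G) (1 : ℂ)) = MonoidAlgebra.single g⁻¹ (1 : ℂ) := by
    intro g
    show (Representation.ofMulAction ℂ G G g⁻¹) (MonoidAlgebra.single 1 1) = _
    rw [Representation.ofMulAction_single]
    congr 1
    simp
  rw [Finset.sum_congr rfl fun g _ => by rw [h2 g]] at h1
  have hsum : (∑ g : G, f g • MonoidAlgebra.single g⁻¹ (1 : ℂ)).coeff x⁻¹
      = ∑ g : G, (f g • MonoidAlgebra.single g⁻¹ (1 : ℂ)).coeff x⁻¹ := by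
    rw [MonoidAlgebra.coeff_sum, Finsupp.finset_sum_apply]
  have hterm : ∀ g : G, (f g • MonoidAlgebra.single g⁻¹ (1 : ℂ)).coeff x⁻¹ = if g = x then f g else 0 := by
    intro g
    rw [MonoidAlgebra.coeff_smul_apply, MonoidAlgebra.coeff_single, Finsupp.single_apply, smul_eq_mul]
    by_cases hgx : g = x
    · rw [if_pos (by rw [hgx]), if_pos hgx, mul_one]
    · rw [if_neg (fun hh => hgx (inv_injective hh)), if_neg hgx, mul_zero]
  have h4 := congrArg (fun φ : MonoidAlgebra ℂ G => φ.coeff x⁻¹) h1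
  simp only [MonoidAlgebra.coeff_zero, Finsupp.coe_zero, Pi.zero_apply] at h4
  rw [hsum, Finset.sum_congr rfl (fun g _ => hterm g)] at h4
  simpa using h4

lemma char_orth {ι : Type} (ρ : ι → FDRep ℂ G) (hρ : IsCompleteIrrepFamily ρ) (i j : ι) :
    ∑ g : G, (ρ i).character g * (ρ j).character g⁻¹
      = if i = j then (Fintype.card G : ℂ) else 0 := by
  haveI := hρ.1 i
  haveI := hρ.1 j
  have hG : (Nat.card G : ℂ) ≠ 0 := Nat.cast_ne_zero.mpr Nat.card_pos.ne'
  letI : Invertible ((Nat.card G : ℂ)) := invertibleOfNonzero hG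
  have h := FDRep.char_orthonormal (k := ℂ) (G := G) (ρ i) (ρ j)
  have h5 : ∑ g : G, (ρ i).character g * (ρ j).character g⁻¹
      = (Nat.card G : ℂ) * ((Nat.card G : ℂ)⁻¹ * ∑ g : G, (ρ i).character g * (ρ j).character g⁻¹) := by
    rw [← mul_assoc, mul_inv_cancel₀ hG, one_mul]
  rw [h5, h]
  have hcc : (Nat.card G : ℂ) = (Fintype.card G : ℂ) := by rw [Nat.card_eq_fintype_card]
  have hiff : Nonempty (ρ i ≅ ρ j) ↔ i = j :=
    ⟨fun hn => hρ.2.1 i j hn, fun he => he ▸ ⟨Iso.refl _⟩⟩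
  by_cases hij : i = j
  · rw [if_pos (hiff.mpr hij), if_pos hij]; simp [Nat.card_eq_fintype_card]
  · rw [if_neg (fun hn => hij (hiff.mp hn)), if_neg hij]; simp

lemma char_eq_of_mk_eq (V : FDRep ℂ G) {x y : G} (h : ConjClasses.mk x = ConjClasses.mk y) :
    V.character x = V.character y := by
  obtain ⟨cc, hc⟩ := isConj_iff.mp (ConjClasses.mk_eq_mk_iff_isConj.mp h)
  rw [← hc]
  exact (FDRep.char_conj V x cc).symm

lemma mk_inv_eq {x y : G} (h : ConjClasses.mk x = ConjClasses.mk y) :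
    ConjClasses.mk x⁻¹ = ConjClasses.mk y⁻¹ := by
  rw [ConjClasses.mk_eq_mk_iff_isConj] at h ⊢
  obtain ⟨cc, hc⟩ := isConj_iff.mp h
  exact isConj_iff.mpr ⟨cc, by rw [← hc]; group⟩

lemma mk_conj_eq (g x : G) : ConjClasses.mk (g * x * g⁻¹) = ConjClasses.mk x :=
  ConjClasses.mk_eq_mk_iff_isConj.mpr (IsConj.symm (isConj_iff.mpr ⟨g, rfl⟩))

lemma sum_inv_filter (H : Subgroup G) (φ : G → ℂ) :
    ∑ h ∈ Finset.univ.filter (fun h : G => h ∈ H ∧ h ≠ 1), φ h⁻¹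
      = ∑ h ∈ Finset.univ.filter (fun h : G => h ∈ H ∧ h ≠ 1), φ h := by
  refine Finset.sum_equiv (Equiv.inv G) ?_ ?_
  · intro x
    simp only [Finset.mem_filter, Finset.mem_univ, true_and, Equiv.inv_apply]
    constructor
    · rintro ⟨h1, h2⟩; exact ⟨inv_mem h1, fun hh => h2 (by simpa using congrArg (·⁻¹) hh)⟩
    · rintro ⟨h1, h2⟩
      refine ⟨by simpa using inv_mem h1, fun hh => h2 (by rw [hh]; exact inv_one)⟩
  · intro x _
    rfl

set_option maxHeartbeats 1000000 in
theorem stmt0_aux {G : Type} [Group G] [Fintype G] {ι : Type} [Fintype ι]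
    (ρ : ι → FDRep ℂ G) (hρ : IsCompleteIrrepFamily ρ)
    (H : Subgroup G) (hH : H ≠ ⊥) :
    ∑ c ∈ Finset.univ.filter (fun c : ConjClasses G => c ≠ ConjClasses.mk 1),
        (Nat.card (c.carrier ∩ (H : Set G) : Set G) : ℝ) ^ 2 *
          (Nat.card H : ℝ)⁻¹ * (Nat.card c.carrier : ℝ)⁻¹
      < weakDist ρ H := by
  classical
  set Hs : Finset G := Finset.univ.filter (fun h : G => h ∈ H ∧ h ≠ 1) with hHs
  set m : G → ℕ := fun x => (Finset.univ.filter (fun y => ConjClasses.mk y = ConjClasses.mk x)).card with hm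
  set nn : G → ℕ := fun x => ((Finset.univ.filter (fun y => ConjClasses.mk y = ConjClasses.mk x)) ∩ Hs).card with hnn
  set f : G → ℂ := fun x => (nn x : ℂ) / (m x : ℂ) with hf
  set a : ι → ℂ := fun i => ∑ h ∈ Hs, (ρ i).character h with ha
  have hm_pos : ∀ x, 0 < m x := fun x => Finset.card_pos.mpr ⟨x, by simp⟩
  have hfilter_eq : ∀ {x y : G}, ConjClasses.mk x = ConjClasses.mk y →
      (Finset.univ.filter (fun z => ConjClasses.mk z = ConjClasses.mk x))
        = (Finset.univ.filter (fun z => ConjClasses.mk z = ConjClasses.mk y)) := by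
    intro x y h; rw [h]
  have hm_eq : ∀ {x y : G}, ConjClasses.mk x = ConjClasses.mk y → m x = m y := by
    intro x y h; rw [hm]; simp only; rw [hfilter_eq h]
  have hnn_eq : ∀ {x y : G}, ConjClasses.mk x = ConjClasses.mk y → nn x = nn y := by
    intro x y h; rw [hnn]; simp only; rw [hfilter_eq h]
  have hfcl : IsClassFn f := by
    intro g x
    rw [hf]; simp only
    rw [hm_eq (mk_conj_eq g x), hnn_eq (mk_conj_eq g x)]
  -- Step M1
  have hM1 : ∀ jj : ι, ∑ x : G, f x * (ρ jj).character x⁻¹ = a jj := by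
    intro jj
    have hstep : ∀ x : G, f x * (ρ jj).character x⁻¹
        = ∑ h ∈ Hs, (if ConjClasses.mk h = ConjClasses.mk x
            then (ρ jj).character x⁻¹ / (m x : ℂ) else 0) := by
      intro x
      rw [Finset.sum_ite, Finset.sum_const_zero, add_zero, Finset.sum_const]
      have hcard : (Hs.filter (fun h => ConjClasses.mk h = ConjClasses.mk x)).card = nn x := by
        rw [hnn]; congr 1
        ext z
        simp only [Finset.mem_filter, Finset.mem_inter, Finset.mem_univ, true_and]
        tauto
      rw [hcard, nsmul_eq_mul, hf]
      field_simp
  -- continue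
    rw [Finset.sum_congr rfl fun x _ => hstep x, Finset.sum_comm]
    have hinner : ∀ h ∈ Hs, (∑ x : G, if ConjClasses.mk h = ConjClasses.mk x
        then (ρ jj).character x⁻¹ / (m x : ℂ) else 0) = (ρ jj).character h⁻¹ := by
      intro h hh
      have hsummand : ∀ x : G, (if ConjClasses.mk h = ConjClasses.mk x
          then (ρ jj).character x⁻¹ / (m x : ℂ) else 0)
          = (if ConjClasses.mk h = ConjClasses.mk x
              then (ρ jj).character h⁻¹ / (m h : ℂ) else 0) := by
        intro x
        by_cases hmk : ConjClasses.mk h = ConjClasses.mk x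
        · rw [if_pos hmk, if_pos hmk, char_eq_of_mk_eq (ρ jj) (mk_inv_eq hmk.symm), hm_eq hmk.symm]
        · rw [if_neg hmk, if_neg hmk]
      rw [Finset.sum_congr rfl fun x _ => hsummand x, Finset.sum_ite, Finset.sum_const_zero,
        add_zero, Finset.sum_const]
      have hcard2 : (Finset.univ.filter (fun x : G => ConjClasses.mk h = ConjClasses.mk x)).card = m h := by
        rw [hm]; congr 1
        ext z
        simp only [Finset.mem_filter, Finset.mem_univ, true_and]
        exact eq_comm
      rw [hcard2, nsmul_eq_mul]
      have hmh : (m h : ℂ) ≠ 0 := Nat.cast_ne_zero.mpr (hm_pos h).ne'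
      field_simp
    rw [Finset.sum_congr rfl hinner, hHs]
    exact sum_inv_filter H ((ρ jj).character)
  -- Step M2: expansion of f in characters
  have hcardG : (Fintype.card G : ℂ) ≠ 0 := Nat.cast_ne_zero.mpr Fintype.card_ne_zero
  set cf : ι → ℂ := fun i => (Fintype.card G : ℂ)⁻¹ * a i with hcf
  set F : G → ℂ := fun x => f x - ∑ i, cf i * (ρ i).character x with hFdef
  have hFcl : IsClassFn F := by
    intro g x
    rw [hFdef]; simp only
    rw [hfcl g x]
    congr 1
    refine Finset.sum_congr rfl fun i _ => ?_
    rw [FDRep.char_conj]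
  have hF0 : ∀ jj, ∑ x : G, F x * (ρ jj).character x⁻¹ = 0 := by
    intro jj
    have hexp : ∀ x : G, F x * (ρ jj).character x⁻¹
        = f x * (ρ jj).character x⁻¹ - ∑ i, cf i * ((ρ i).character x * (ρ jj).character x⁻¹) := by
      intro x
      rw [hFdef]; simp only
      rw [sub_mul, Finset.sum_mul]
      congr 1
      refine Finset.sum_congr rfl fun i _ => by ring
    rw [Finset.sum_congr rfl fun x _ => hexp x, Finset.sum_sub_distrib, hM1 jj, Finset.sum_comm]
    have hsecond : ∀ i ∈ (Finset.univ : Finset ι),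
        (∑ x : G, cf i * ((ρ i).character x * (ρ jj).character x⁻¹))
        = if i = jj then a jj else 0 := by
      intro i _
      rw [← Finset.mul_sum, char_orth ρ hρ i jj]
      by_cases hij : i = jj
      · rw [if_pos hij, if_pos hij, hcf]; simp only
        rw [hij]
        field_simp
      · rw [if_neg hij, if_neg hij, mul_zero]
    rw [Finset.sum_congr rfl hsecond, Finset.sum_ite_eq' Finset.univ jj (fun _ => a jj),
      if_pos (Finset.mem_univ jj), sub_self]
  have hfeq : ∀ x, f x = ∑ i, cf i * (ρ i).character x := by
    intro x
    have h := classFn_eq_zero ρ hρ F hFcl hF0 x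
    rw [hFdef] at h; simp only at h
    exact sub_eq_zero.mp h
  -- Step M3
  have hW2 : ∑ h ∈ Hs, f h = ∑ i, cf i * a i := by
    rw [Finset.sum_congr rfl fun h _ => hfeq h, Finset.sum_comm]
    refine Finset.sum_congr rfl fun i _ => ?_
    rw [← Finset.mul_sum, ha]
  have hsum_sq : ∑ i, a i * a i = (Fintype.card G : ℂ) * ∑ h ∈ Hs, f h := by
    rw [hW2, Finset.mul_sum]
    refine Finset.sum_congr rfl fun i _ => ?_
    rw [hcf]; simp only
    rw [← mul_assoc, ← mul_assoc, mul_inv_cancel₀ hcardG, one_mul]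
  -- real quantities
  set Wr : ℝ := ∑ h ∈ Hs, (nn h : ℝ) / (m h : ℝ) with hWr
  have hWr_nonneg : 0 ≤ Wr := Finset.sum_nonneg fun h _ => div_nonneg (Nat.cast_nonneg _) (Nat.cast_nonneg _)
  have hWcast : ∑ h ∈ Hs, f h = (Wr : ℂ) := by
    rw [hWr]
    push_cast
    exact Finset.sum_congr rfl fun h _ => rfl
  set S : ℝ := ∑ i, (finrank ℂ (ρ i) : ℝ) * ‖a i‖ with hS
  have habs_a : ∀ i, ‖a i‖ ≤ (Hs.card : ℝ) * (finrank ℂ (ρ i) : ℝ) := by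
    intro i
    rw [ha]; simp only
    calc ‖∑ h ∈ Hs, (ρ i).character h‖
        ≤ ∑ h ∈ Hs, ‖(ρ i).character h‖ := by
          simpa using norm_sum_le Hs (fun h => (ρ i).character h)
      _ ≤ ∑ _h ∈ Hs, (finrank ℂ (ρ i) : ℝ) := Finset.sum_le_sum fun h _ => char_abs_le (ρ i) h
      _ = (Hs.card : ℝ) * (finrank ℂ (ρ i) : ℝ) := by rw [Finset.sum_const, nsmul_eq_mul]
  have hQ : (Fintype.card G : ℝ) * Wr ≤ (Hs.card : ℝ) * S := by
    have h1 : ‖∑ i, a i * a i‖ = (Fintype.card G : ℝ) * Wr := by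
      rw [hsum_sq, hWcast, ← Complex.ofReal_natCast, ← Complex.ofReal_mul, Complex.norm_real, Real.norm_eq_abs,
        abs_of_nonneg (mul_nonneg (by positivity) hWr_nonneg)]
    have h2 : ‖∑ i, a i * a i‖ ≤ ∑ i, ‖a i‖ * ‖a i‖ := by
      calc ‖∑ i, a i * a i‖ ≤ ∑ i, ‖a i * a i‖ := by
            simpa using norm_sum_le Finset.univ (fun i => a i * a i)
        _ = ∑ i, ‖a i‖ * ‖a i‖ :=
            Finset.sum_congr rfl fun i _ => norm_mul _ _
    have h3 : ∑ i, ‖a i‖ * ‖a i‖ ≤ (Hs.card : ℝ) * S := by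
      rw [hS, Finset.mul_sum]
      refine Finset.sum_le_sum fun i _ => ?_
      have hb := habs_a i
      have hnni := norm_nonneg (a i)
      nlinarith
    linarith
  -- positivity facts
  have hHs_pos : 0 < Hs.card := by
    rw [Finset.card_pos]
    obtain ⟨x, hxH, hx1⟩ := (Subgroup.bot_or_exists_ne_one H).resolve_left hH
    exact ⟨x, by simp [hHs, hxH, hx1]⟩
  have hWr_pos : 0 < Wr := by
    rw [hWr]
    refine Finset.sum_pos (fun h hh => ?_) (Finset.card_pos.mp hHs_pos)
    have h1 : 0 < nn h := by
      rw [hnn]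
      exact Finset.card_pos.mpr ⟨h, Finset.mem_inter.mpr ⟨by simp, hh⟩⟩
    have h2 := hm_pos h
    have h1' : (0:ℝ) < (nn h : ℝ) := by exact_mod_cast h1
    have h2' : (0:ℝ) < (m h : ℝ) := by exact_mod_cast h2
    exact div_pos h1' h2'
  -- counting conversions
  have hNatCardCarrier : ∀ cc : ConjClasses G, (Nat.card cc.carrier : ℝ)
      = (((Finset.univ.filter (fun y : G => ConjClasses.mk y = cc)).card : ℕ) : ℝ) := by
    intro cc
    congr 1
    rw [Nat.card_coe_set_eq, Set.ncard_eq_toFinset_card']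
    congr 1
    ext z
    simp [Set.mem_toFinset, ConjClasses.mem_carrier_iff_mk_eq]
  have hNatCardInter : ∀ cc : ConjClasses G, cc ≠ ConjClasses.mk 1 →
      (Nat.card (cc.carrier ∩ (H : Set G) : Set G) : ℝ)
      = ((((Finset.univ.filter (fun y : G => ConjClasses.mk y = cc)) ∩ Hs).card : ℕ) : ℝ) := by
    intro cc hcc
    congr 1
    rw [Nat.card_coe_set_eq, Set.ncard_eq_toFinset_card']
    congr 1
    ext z
    simp only [Set.mem_toFinset, Set.mem_inter_iff, ConjClasses.mem_carrier_iff_mk_eq,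
      SetLike.mem_coe, Finset.mem_inter, Finset.mem_filter, Finset.mem_univ, true_and, hHs]
    constructor
    · rintro ⟨h1, h2⟩
      exact ⟨h1, h2, fun hz => hcc (by rw [← h1, hz])⟩
    · rintro ⟨h1, h2, _⟩
      exact ⟨h1, h2⟩
  -- grouping Wr by conjugacy classes
  have hWr_group : Wr = ∑ cc ∈ Finset.univ.filter (fun c : ConjClasses G => c ≠ ConjClasses.mk 1),
      (((((Finset.univ.filter (fun y : G => ConjClasses.mk y = cc)) ∩ Hs).card : ℕ) : ℝ)) ^ 2
        * ((((Finset.univ.filter (fun y : G => ConjClasses.mk y = cc)).card : ℕ) : ℝ))⁻¹ := by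
    have h0 := Finset.sum_fiberwise Hs (fun h => ConjClasses.mk h) (fun h => (nn h : ℝ) / (m h : ℝ))
    rw [hWr, ← h0]
    have hfiber : ∀ cc : ConjClasses G, Hs.filter (fun h => ConjClasses.mk h = cc)
        = (Finset.univ.filter (fun y : G => ConjClasses.mk y = cc)) ∩ Hs := by
      intro cc; ext z
      simp only [Finset.mem_filter, Finset.mem_inter, Finset.mem_univ, true_and]
      tauto
    have hinner : ∀ cc : ConjClasses G,
        (∑ h ∈ Hs.filter (fun h => ConjClasses.mk h = cc), (nn h : ℝ) / (m h : ℝ))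
        = (((((Finset.univ.filter (fun y : G => ConjClasses.mk y = cc)) ∩ Hs).card : ℕ) : ℝ)) ^ 2
            * ((((Finset.univ.filter (fun y : G => ConjClasses.mk y = cc)).card : ℕ) : ℝ))⁻¹ := by
      intro cc
      have hconst : ∀ h ∈ Hs.filter (fun h => ConjClasses.mk h = cc),
          (nn h : ℝ) / (m h : ℝ)
          = (((((Finset.univ.filter (fun y : G => ConjClasses.mk y = cc)) ∩ Hs).card : ℕ) : ℝ))
              * ((((Finset.univ.filter (fun y : G => ConjClasses.mk y = cc)).card : ℕ) : ℝ))⁻¹ := by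
        intro h hh
        obtain ⟨-, hmk⟩ := Finset.mem_filter.mp hh
        have hnne : nn h = ((Finset.univ.filter (fun y : G => ConjClasses.mk y = cc)) ∩ Hs).card := by
          rw [hnn]; simp only; rw [hmk]
        have hme : m h = (Finset.univ.filter (fun y : G => ConjClasses.mk y = cc)).card := by
          rw [hm]; simp only; rw [hmk]
        rw [hnne, hme, div_eq_mul_inv]
      rw [Finset.sum_congr rfl hconst, Finset.sum_const, hfiber cc, nsmul_eq_mul]
      ring
    rw [Finset.sum_congr rfl fun cc _ => hinner cc]
    symm
    apply Finset.sum_subset (Finset.filter_subset _ _)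
    intro cc _ hcc
    have hcc1 : cc = ConjClasses.mk 1 := by
      by_contra hne; exact hcc (Finset.mem_filter.mpr ⟨Finset.mem_univ _, hne⟩)
    have hzero : ((Finset.univ.filter (fun y : G => ConjClasses.mk y = cc)) ∩ Hs) = ∅ := by
      rw [Finset.eq_empty_iff_forall_notMem]
      intro z hz
      rw [Finset.mem_inter, Finset.mem_filter] at hz
      obtain ⟨⟨-, hzc⟩, hzH⟩ := hz
      rw [hHs, Finset.mem_filter] at hzH
      apply hzH.2.2
      rw [hcc1] at hzc
      exact isConj_one_left.mp (ConjClasses.mk_eq_mk_iff_isConj.mp hzc)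
    rw [hzero]
    simp
  -- identify the goal sum
  have hgoal_eq : (∑ c ∈ Finset.univ.filter (fun c : ConjClasses G => c ≠ ConjClasses.mk 1),
      (Nat.card (c.carrier ∩ (H : Set G) : Set G) : ℝ) ^ 2 *
        (Nat.card H : ℝ)⁻¹ * (Nat.card c.carrier : ℝ)⁻¹)
      = (Nat.card H : ℝ)⁻¹ * Wr := by
    rw [hWr_group, Finset.mul_sum]
    refine Finset.sum_congr rfl fun cc hcc => ?_
    obtain hcc' := (Finset.mem_filter.mp hcc).2
    rw [hNatCardInter cc hcc', hNatCardCarrier cc]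
    ring
  rw [hgoal_eq]
  -- final chain
  have hcardH : (Hs.card : ℝ) < (Nat.card H : ℝ) := by
    have h1 : Hs.card < Nat.card H := by
      rw [Nat.card_eq_fintype_card, Fintype.card_subtype]
      apply Finset.card_lt_card
      rw [Finset.ssubset_iff_of_subset]
      · exact ⟨1, by simp [H.one_mem], by simp [hHs]⟩
      · intro z hz
        rw [hHs, Finset.mem_filter] at hz
        simp [hz.2.1]
    exact_mod_cast h1
  have hstrict : (Nat.card H : ℝ)⁻¹ * Wr < (Hs.card : ℝ)⁻¹ * Wr := by
    apply mul_lt_mul_of_pos_right _ hWr_pos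
    exact inv_strictAnti₀ (by exact_mod_cast hHs_pos) hcardH
  have hle : (Hs.card : ℝ)⁻¹ * Wr ≤ weakDist ρ H := by
    have hGpos : (0:ℝ) < Fintype.card G := by exact_mod_cast Fintype.card_pos
    have hHspos : (0:ℝ) < (Hs.card : ℝ) := by exact_mod_cast hHs_pos
    have hweak : weakDist ρ H = (Fintype.card G : ℝ)⁻¹ * S := rfl
    rw [hweak, inv_mul_eq_div, inv_mul_eq_div, div_le_div_iff₀ hHspos hGpos]
    nlinarith [hQ]
  linarith

end WQFS


/-- lower bound on `D_H` in terms of conjugacy class intersections. -/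
theorem stmt_0 {G : Type} [Group G] [Fintype G] {ι : Type} [Fintype ι]
    (ρ : ι → FDRep ℂ G) (hρ : IsCompleteIrrepFamily ρ)
    (H : Subgroup G) (hH : H ≠ ⊥) :
    ∑ c ∈ Finset.univ.filter (fun c : ConjClasses G => c ≠ ConjClasses.mk 1),
        (Nat.card (c.carrier ∩ (H : Set G) : Set G) : ℝ) ^ 2 *
          (Nat.card H : ℝ)⁻¹ * (Nat.card c.carrier : ℝ)⁻¹
      < weakDist ρ H :=
  WQFS.stmt0_aux ρ hρ H hH
end

section
/- Let G be a finite group, H ≤ G a subgroup, and let C_1, …, C_k denote the non-identity conjugacy classes of G. Then D_H ≤ Σ_{i=1}^k |C_i ∩ H| · |C_i|^{-1/2}. -/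
/-!
By the triangle inequality, `D_H ≤ ∑_{h ∈ H, h ≠ 1} |G|⁻¹ ∑_ρ d_ρ |χ_ρ(h)|`, and grouping the `h` by
conjugacy class it suffices to show `|G|⁻¹ ∑_ρ d_ρ |χ_ρ(g)| ≤ |C(g)|^(-1/2)` for every `g`.
By Cauchy–Schwarz the left side is at most `|G|⁻¹ (∑ d_ρ²)^(1/2) (∑ |χ_ρ(g)|²)^(1/2)`. Bessel's
inequality for the orthonormal characters in `L²(G)`, tested against the indicator of the class of
`g`, gives `∑_ρ |χ_ρ(g)|² ≤ |G| / |C(g)|`, and at `g = 1` this reads `∑ d_ρ² ≤ |G|`.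
Orthonormality needs `χ(g⁻¹) = conj χ(g)`: `ρ(g)` is diagonalisable with roots of unity as
eigenvalues.
-/

open CategoryTheory Finset
open scoped Classical

universe u v

namespace Module.End
variable {K : Type u} {V : Type v} [Field K] [AddCommGroup V] [Module K V]

theorem exists_basis_hasEigenvector [FiniteDimensional K V] [IsAlgClosed K] {f : End K V}
    (hf : f.IsSemisimple) :
    ∃ (κ : Type u) (_ : Fintype κ) (b : Basis κ K V) (μ : κ → K),
      ∀ i, f.HasEigenvector (μ i) (b i) := by
  have hint := DirectSum.isInternal_submodule_of_iSupIndep_of_iSup_eq_top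
    f.eigenspaces_iSupIndep hf.iSup_eigenspace_eq_top
  let b : Basis ((μ : K) × Fin (finrank K (f.eigenspace μ))) K V :=
    hint.collectedBasis fun μ ↦ finBasis K (f.eigenspace μ)
  refine ⟨_, FiniteDimensional.fintypeBasisIndex b, b, Sigma.fst, fun i ↦ ⟨?_, b.ne_zero i⟩⟩
  exact hint.collectedBasis_mem _ i

theorem isSemisimple_of_pow_eq_one [CharZero K] {f : End K V} {n : ℕ} (hn : n ≠ 0)
    (hf : f ^ n = 1) : f.IsSemisimple :=
  isSemisimple_of_squarefree_aeval_eq_zero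
    (Polynomial.separable_X_pow_sub_C 1 (Nat.cast_ne_zero.mpr hn) one_ne_zero).squarefree
    (by simp [hf])

end Module.End

theorem LinearMap.trace_eq_sum_of_apply_eq_smul {K V κ : Type*} [Field K] [AddCommGroup V]
    [Module K V] [Fintype κ] (b : Module.Basis κ K V) (μ : κ → K) {f : Module.End K V}
    (hf : ∀ i, f (b i) = μ i • b i) : LinearMap.trace K V f = ∑ i, μ i := by
  have : LinearMap.toMatrix b b f = Matrix.diagonal μ := by
    ext i j
    rw [LinearMap.toMatrix_apply, hf j, map_smul, b.repr_self, Matrix.diagonal_apply]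
    by_cases hij : i = j <;> simp [hij]
  rw [LinearMap.trace_eq_matrix_trace K b, this, Matrix.trace_diagonal]

/-- The eigenvalues of `f` lie on the unit circle, where inversion is conjugation. -/
theorem LinearMap.trace_eq_conj_trace_of_mul_eq_one {V : Type*} [AddCommGroup V] [Module ℂ V]
    [FiniteDimensional ℂ V] {f f' : Module.End ℂ V} {n : ℕ} (hn : n ≠ 0) (hf : f ^ n = 1)
    (hf' : f' * f = 1) : LinearMap.trace ℂ V f' = starRingEnd ℂ (LinearMap.trace ℂ V f) := by
  obtain ⟨κ, _, b, μ, hμ⟩ := Module.End.exists_basis_hasEigenvector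
    (Module.End.isSemisimple_of_pow_eq_one hn hf)
  have hμ_pow (i : κ) : μ i ^ n = 1 := by
    have := (hμ i).pow_apply n
    rw [hf, Module.End.one_apply] at this
    exact smul_left_injective ℂ (hμ i).2 (by simpa using this.symm)
  have hf'_apply (i : κ) : f' (b i) = (μ i)⁻¹ • b i := by
    have h := congrArg f' (hμ i).apply_eq_smul
    rw [← Module.End.mul_apply, hf', Module.End.one_apply, map_smul] at h
    have hμ0 : μ i ≠ 0 := fun h0 ↦ by simpa [h0, hn] using hμ_pow i
    exact (eq_inv_smul_iff₀ hμ0).mpr h.symm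
  rw [trace_eq_sum_of_apply_eq_smul b _ hf'_apply,
    trace_eq_sum_of_apply_eq_smul b μ fun i ↦ (hμ i).apply_eq_smul, map_sum]
  exact Finset.sum_congr rfl fun i _ ↦
    Complex.inv_eq_conj (Complex.norm_eq_one_of_pow_eq_one (hμ_pow i) hn)

theorem FDRep.char_inv {G : Type*} [Group G] (V : FDRep ℂ G) {g : G} (hg : IsOfFinOrder g) :
    V.character g⁻¹ = starRingEnd ℂ (V.character g) := by
  obtain ⟨n, hn, hgn⟩ := hg.exists_pow_eq_one
  exact LinearMap.trace_eq_conj_trace_of_mul_eq_one hn.ne' (by rw [← map_pow, hgn, map_one])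
    (by rw [← map_mul, inv_mul_cancel, map_one])

theorem ConjClasses.natCard_carrier_mk {G : Type*} [Group G] [Fintype G] (g : G) :
    Nat.card (ConjClasses.mk g).carrier = #{h | IsConj g h} := by
  rw [Nat.card_eq_card_toFinset]
  congr 1
  ext h
  simp only [Set.mem_toFinset, ConjClasses.mem_carrier_iff_mk_eq, ConjClasses.mk_eq_mk_iff_isConj,
    Finset.mem_filter, Finset.mem_univ, true_and]
  exact isConj_comm

namespace FDRep

theorem char_eq_of_isConj {k G : Type*} [Field k] [Group G] (V : FDRep k G) {g h : G}
    (hgh : IsConj g h) : V.character h = V.character g := by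
  obtain ⟨c, rfl⟩ := isConj_iff.mp hgh
  exact char_conj V g c

variable {G : Type} [Group G] [Fintype G] {ι : Type*}

noncomputable def normalizedCharacter (V : FDRep ℂ G) : EuclideanSpace ℂ G :=
  WithLp.toLp 2 fun g ↦ ((√(Fintype.card G) : ℝ) : ℂ)⁻¹ * V.character g

theorem orthonormal_normalizedCharacter {ρ : ι → FDRep ℂ G} (hsimple : ∀ i, Simple (ρ i))
    (hdistinct : ∀ i j, Nonempty (ρ i ≅ ρ j) → i = j) :
    Orthonormal ℂ fun i ↦ (ρ i).normalizedCharacter := by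
  rw [orthonormal_iff_ite]
  intro i j
  have hN : ((√(Fintype.card G) : ℝ) : ℂ) ^ 2 = Fintype.card G := by
    rw [← Complex.ofReal_pow, Real.sq_sqrt (Nat.cast_nonneg _), Complex.ofReal_natCast]
  have hinner : inner ℂ (ρ i).normalizedCharacter (ρ j).normalizedCharacter =
      (Nat.card G : ℂ)⁻¹ * ∑ g : G, (ρ j).character g * (ρ i).character g⁻¹ := by
    simp only [normalizedCharacter, PiLp.inner_apply, RCLike.inner_apply, map_mul, map_inv₀,
      Complex.conj_ofReal, Nat.card_eq_fintype_card, Finset.mul_sum]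
    refine Finset.sum_congr rfl fun g _ ↦ ?_
    rw [← hN, char_inv _ (isOfFinOrder_of_finite g)]
    ring
  have := hsimple i
  have := hsimple j
  have : Invertible (Nat.card G : ℂ) := invertibleOfNonzero (by simp)
  rw [hinner, char_orthonormal]
  by_cases hij : i = j
  · subst hij; simp
  · rw [if_neg hij, if_neg fun ⟨e⟩ ↦ hij (hdistinct j i ⟨e⟩).symm]

theorem sum_norm_char_sq_le [Fintype ι] {ρ : ι → FDRep ℂ G} (hsimple : ∀ i, Simple (ρ i))
    (hdistinct : ∀ i j, Nonempty (ρ i ≅ ρ j) → i = j) (g : G) :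
    ∑ i, ‖(ρ i).character g‖ ^ 2 ≤ Fintype.card G / Nat.card (ConjClasses.mk g).carrier := by
  set C : Finset G := {h | IsConj g h}
  have hC : (0 : ℝ) < #C := by
    exact_mod_cast Finset.card_pos.mpr ⟨g, Finset.mem_filter.mpr ⟨mem_univ g, IsConj.refl g⟩⟩
  let x : EuclideanSpace ℂ G := WithLp.toLp 2 fun h ↦ if h ∈ C then 1 else 0
  have hx : ‖x‖ ^ 2 = #C := by
    simp [x, EuclideanSpace.norm_sq_eq, apply_ite, Finset.sum_ite_mem]
  have hinner (i : ι) : inner ℂ (ρ i).normalizedCharacter x =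
      #C * ((√(Fintype.card G) : ℝ) : ℂ)⁻¹ * starRingEnd ℂ ((ρ i).character g) := by
    simp only [x, normalizedCharacter, PiLp.inner_apply, RCLike.inner_apply, ite_mul, one_mul,
      zero_mul, Finset.sum_ite_mem, Finset.univ_inter]
    have hconst (h : G) (hh : h ∈ C) : (ρ i).character h = (ρ i).character g :=
      char_eq_of_isConj _ (Finset.mem_filter.mp hh).2
    rw [Finset.sum_congr rfl fun h hh ↦ by rw [hconst h hh], Finset.sum_const, nsmul_eq_mul,
      map_mul, map_inv₀, Complex.conj_ofReal, mul_assoc]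
  have hbessel := (orthonormal_normalizedCharacter hsimple hdistinct).sum_inner_products_le
    (s := Finset.univ) x
  have hN : (0 : ℝ) < Fintype.card G := by exact_mod_cast Fintype.card_pos
  have hterm (i : ι) : ‖inner ℂ (ρ i).normalizedCharacter x‖ ^ 2 =
      #C ^ 2 / Fintype.card G * ‖(ρ i).character g‖ ^ 2 := by
    rw [hinner, norm_mul, norm_mul, Complex.norm_conj, norm_inv, Complex.norm_real,
      Complex.norm_natCast, Real.norm_of_nonneg (Real.sqrt_nonneg _), mul_pow, mul_pow, inv_pow,
      Real.sq_sqrt hN.le]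
    ring
  simp only [hterm, hx, ← Finset.mul_sum] at hbessel
  rw [ConjClasses.natCard_carrier_mk, le_div_iff₀ hC]
  rw [div_mul_eq_mul_div, div_le_iff₀ hN] at hbessel
  nlinarith

theorem sum_finrank_sq_le [Fintype ι] {ρ : ι → FDRep ℂ G} (hsimple : ∀ i, Simple (ρ i))
    (hdistinct : ∀ i j, Nonempty (ρ i ≅ ρ j) → i = j) :
    ∑ i, (Module.finrank ℂ (ρ i) : ℝ) ^ 2 ≤ Fintype.card G := by
  have hcard : Nat.card (ConjClasses.mk (1 : G)).carrier = 1 := by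
    rw [ConjClasses.natCard_carrier_mk]
    simp [Finset.filter_eq]
  have := sum_norm_char_sq_le hsimple hdistinct 1
  rw [hcard] at this
  simpa [char_one] using this

theorem sum_finrank_mul_norm_char_le [Fintype ι] {ρ : ι → FDRep ℂ G}
    (hsimple : ∀ i, Simple (ρ i)) (hdistinct : ∀ i j, Nonempty (ρ i ≅ ρ j) → i = j) (g : G) :
    (Fintype.card G : ℝ)⁻¹ * ∑ i, (Module.finrank ℂ (ρ i) : ℝ) * ‖(ρ i).character g‖ ≤
      (Nat.card (ConjClasses.mk g).carrier : ℝ) ^ (-(1 / 2 : ℝ)) := by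
  have hN : (0 : ℝ) < Fintype.card G := by exact_mod_cast Fintype.card_pos
  have hc : (0 : ℝ) < Nat.card (ConjClasses.mk g).carrier := by
    have : Nonempty (ConjClasses.mk g).carrier := ⟨⟨g, ConjClasses.mem_carrier_mk⟩⟩
    exact_mod_cast Nat.card_pos
  set N : ℝ := (Fintype.card G : ℝ)
  set c : ℝ := (Nat.card (ConjClasses.mk g).carrier : ℝ)
  calc N⁻¹ * ∑ i, (Module.finrank ℂ (ρ i) : ℝ) * ‖(ρ i).character g‖
      ≤ N⁻¹ * (√N * √(N / c)) := by
        gcongr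
        refine (Real.sum_mul_le_sqrt_mul_sqrt _ _ _).trans ?_
        gcongr
        · exact sum_finrank_sq_le hsimple hdistinct
        · exact sum_norm_char_sq_le hsimple hdistinct g
    _ = c ^ (-(1 / 2 : ℝ)) := by
        rw [Real.sqrt_div' _ hc.le, Real.rpow_neg hc.le, ← Real.sqrt_eq_rpow]
        field_simp
        rw [Real.sq_sqrt hN.le]

end FDRep

theorem ConjClasses.sum_mk_eq_sum_natCard_inter {G R : Type*} [Group G] [Fintype G] [Semiring R]
    (H : Subgroup G) (f : ConjClasses G → R) :
    ∑ h ∈ Finset.univ.filter (fun h : G => h ∈ H ∧ h ≠ 1), f (ConjClasses.mk h) =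
      ∑ c ∈ Finset.univ.filter (fun c : ConjClasses G => c ≠ ConjClasses.mk 1),
        (Nat.card (c.carrier ∩ (H : Set G) : Set G) : R) * f c := by
  rw [← Finset.sum_fiberwise_of_maps_to (g := ConjClasses.mk)
    (t := Finset.univ.filter (fun c : ConjClasses G => c ≠ ConjClasses.mk 1)) fun h hh ↦ by
      simpa [ConjClasses.mk_eq_mk_iff_isConj, isConj_one_left] using (Finset.mem_filter.mp hh).2.2]
  refine Finset.sum_congr rfl fun c hc ↦ ?_
  rw [Finset.sum_congr rfl fun h hh ↦ by rw [(Finset.mem_filter.mp hh).2], Finset.sum_const,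
    nsmul_eq_mul, Nat.card_eq_card_toFinset]
  congr 3
  ext h
  simp only [Set.mem_toFinset, Set.mem_inter_iff, ConjClasses.mem_carrier_iff_mk_eq,
    SetLike.mem_coe, Finset.mem_filter, Finset.mem_univ, true_and]
  constructor
  · rintro ⟨⟨hH, -⟩, rfl⟩
    exact ⟨rfl, hH⟩
  · rintro ⟨rfl, hH⟩
    refine ⟨⟨hH, ?_⟩, rfl⟩
    rintro rfl
    exact (Finset.mem_filter.mp hc).2 rfl

/-- upper bound on `D_H` in terms of conjugacy class intersections. -/
theorem stmt_1 {G : Type} [Group G] [Fintype G] {ι : Type} [Fintype ι]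
    (ρ : ι → FDRep ℂ G) (hρ : IsCompleteIrrepFamily ρ) (H : Subgroup G) :
    weakDist ρ H ≤
      ∑ c ∈ Finset.univ.filter (fun c : ConjClasses G => c ≠ ConjClasses.mk 1),
        (Nat.card (c.carrier ∩ (H : Set G) : Set G) : ℝ) *
          (Nat.card c.carrier : ℝ) ^ (-(1 / 2 : ℝ)) := by
  obtain ⟨hsimple, hdistinct, -⟩ := hρ
  set S := Finset.univ.filter (fun h : G => h ∈ H ∧ h ≠ 1)
  calc weakDist ρ H
      ≤ (Fintype.card G : ℝ)⁻¹ *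
          ∑ i, (Module.finrank ℂ (ρ i) : ℝ) * ∑ h ∈ S, ‖(ρ i).character h‖ := by
        unfold weakDist
        gcongr
        exact norm_sum_le _ _
    _ = ∑ h ∈ S, (Fintype.card G : ℝ)⁻¹ *
          ∑ i, (Module.finrank ℂ (ρ i) : ℝ) * ‖(ρ i).character h‖ := by
        simp_rw [Finset.mul_sum]
        exact Finset.sum_comm
    _ ≤ ∑ h ∈ S, (Nat.card (ConjClasses.mk h).carrier : ℝ) ^ (-(1 / 2 : ℝ)) :=
        Finset.sum_le_sum fun h _ ↦ FDRep.sum_finrank_mul_norm_char_le hsimple hdistinct h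
    _ = _ := ConjClasses.sum_mk_eq_sum_natCard_inter H fun c ↦
        (Nat.card c.carrier : ℝ) ^ (-(1 / 2 : ℝ))
end

section
/- Let G be a finite group and H ≤ G a nontrivial subgroup, and let X = G/H be the coset space on which G acts by multiplication. For g ∈ G let fix_X(g) denote the number of fixed points of g on X. Then D_H > (1/|G|) · Σ_{h ∈ H, h ≠ e} fix_X(h). -/
open CategoryTheory Finset
open scoped Classical

/-!
Write `d_ρ = dim ρ` and `m_ρ = dim ρ^H`, so that `Σ_{h ∈ H} χ_ρ(h) = |H| m_ρ`. By Frobenius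
reciprocity `m_ρ` is also the multiplicity of `ρ` in the permutation representation `ℂ[G/H]`,
whose character is `fix_X`. Hence
`Σ_{h ∈ H, h ≠ e} fix_X(h) = Σ_ρ m_ρ (|H| m_ρ - d_ρ)` and `|G| D_H = Σ_ρ d_ρ ||H| m_ρ - d_ρ|`,
and the first sum is termwise at most the second because `m_ρ ≤ d_ρ`. It is strictly smaller as
soon as some `ρ` has `|H| m_ρ < d_ρ`. If there were none, `|G| = Σ_ρ d_ρ² ≤ |H| Σ_ρ m_ρ d_ρ =
|H| |G/H| = |G|` would force `d_ρ = |H| m_ρ` for every `ρ`, which fails for the trivial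
representation since `|H| > 1`.
-/

theorem LinearMap.trace_eq_trace_restrict_add_trace_restrict {K V : Type*} [Field K]
    [AddCommGroup V] [Module K V] [FiniteDimensional K V] {W W' : Submodule K V}
    (h : IsCompl W W') (f : V →ₗ[K] V) (hW : Set.MapsTo f W W) (hW' : Set.MapsTo f W' W') :
    trace K V f = trace K W (f.restrict hW) + trace K W' (f.restrict hW') := by
  have hint := (DirectSum.isInternal_submodule_iff_isCompl (fun b : Bool => cond b W W')
    (i := true) (j := false) (by decide) (Set.ext fun b => by cases b <;> simp)).mpr h
  rw [trace_eq_sum_trace_restrict hint (f := f) (fun b => by cases b <;> assumption),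
    Fintype.sum_bool]
  rfl

namespace Representation

variable {K G V : Type*} [Field K] [Monoid G] [AddCommGroup V] [Module K V]
  {ρ : Representation K G V}

theorem Subrepresentation.isCompl_toSubmodule {σ τ : Subrepresentation ρ} (h : IsCompl σ τ) :
    IsCompl σ.toSubmodule τ.toSubmodule where
  disjoint := disjoint_iff.mpr (congrArg Subrepresentation.toSubmodule h.inf_eq_bot)
  codisjoint := codisjoint_iff.mpr (congrArg Subrepresentation.toSubmodule h.sup_eq_top)

theorem character_eq_add_of_isCompl [FiniteDimensional K V] {σ τ : Subrepresentation ρ}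
    (h : IsCompl σ τ) (g : G) :
    ρ.character g = σ.toRepresentation.character g + τ.toRepresentation.character g :=
  LinearMap.trace_eq_trace_restrict_add_trace_restrict
    (Subrepresentation.isCompl_toSubmodule h) _
    (σ.apply_mem_toSubmodule g) (τ.apply_mem_toSubmodule g)

end Representation

section Subgroup

variable {G : Type} [Group G] [Fintype G]

theorem Subgroup.sum_filter_mem_ne_one {M : Type*} [AddCommGroup M] (H : Subgroup G) (f : G → M) :
    ∑ h ∈ univ.filter (fun h : G => h ∈ H ∧ h ≠ 1), f h = ∑ h : H, f h - f 1 := by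
  have hfilter : univ.filter (fun h : G => h ∈ H ∧ h ≠ 1) = (univ.filter (· ∈ H)).erase 1 := by
    ext x
    simp [and_comm]
  rw [hfilter, sum_erase_eq_sub (by simp [H.one_mem]), sum_subtype (p := (· ∈ H)) _ (by simp)]

theorem Subgroup.sum_ite_smul_eq_self_quotient {M : Type*} [AddCommMonoid M] (H : Subgroup G)
    (f : G → M) (hf : ∀ a g, f (a * g * a⁻¹) = f g) (x : G ⧸ H) :
    ∑ g : G, (if g • x = x then f g else 0) = ∑ h : H, f h := by
  induction x using QuotientGroup.induction_on with | H a => ?_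
  have hstab : ∀ g : G, g • (a : G ⧸ H) = a ↔ a⁻¹ * g * a ∈ H := fun g => by
    rw [MulAction.Quotient.smul_mk, QuotientGroup.eq, ← H.inv_mem_iff, smul_eq_mul]
    simp only [mul_inv_rev, inv_inv, mul_assoc]
  have hconj : ∀ g, f (a⁻¹ * g * a) = f g := fun g => by simpa using hf a⁻¹ g
  calc ∑ g : G, (if g • (a : G ⧸ H) = a then f g else 0)
      = ∑ g : G, (if g ∈ H then f g else 0) :=
        Fintype.sum_equiv (MulAut.conj a⁻¹).toEquiv _ _ fun g => by
          simp only [hstab, MulEquiv.toEquiv_eq_coe, MulEquiv.coe_toEquiv, MulAut.conj_apply,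
            inv_inv, hconj]
    _ = ∑ h : H, f h := by
        rw [← sum_filter]
        exact sum_subtype _ (by simp) f

end Subgroup

namespace FDRep

variable {G : Type} [Group G]

theorem character_trivial (g : G) :
    (FDRep.of (Representation.trivial ℂ G ℂ)).character g = 1 := by
  simp [character]

theorem finrank_lt_of_ne_top {V : FDRep ℂ G} {σ : Subrepresentation V.ρ} (h : σ ≠ ⊤) :
    Module.finrank ℂ σ.toSubmodule < Module.finrank ℂ V :=
  Submodule.finrank_lt fun h' => h (Subrepresentation.toSubmodule_injective h')

theorem character_ofMulAction (X : Type) [Fintype X] [MulAction G X] (g : G) :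
    (FDRep.of (Representation.ofMulAction ℂ G X)).character g =
      Nat.card (MulAction.fixedBy X g) := by
  rw [character, of_ρ', LinearMap.trace_eq_matrix_trace ℂ (MonoidAlgebra.basis X ℂ),
    Matrix.trace]
  have hdiag : ∀ x : X, (LinearMap.toMatrix (MonoidAlgebra.basis X ℂ) (MonoidAlgebra.basis X ℂ)
      (Representation.ofMulAction ℂ G X g)).diag x = if g • x = x then 1 else 0 := fun x => by
    rw [Matrix.diag_apply, LinearMap.toMatrix_apply, MonoidAlgebra.basis_apply,
      Representation.ofMulAction_single, ← MonoidAlgebra.basis_apply (k := ℂ),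
      Module.Basis.repr_self, Finsupp.single_apply]
  simp only [hdiag, sum_boole, Nat.card_eq_fintype_card, Fintype.card_subtype]
  rfl

noncomputable def finrankInvariants (H : Subgroup G) (V : FDRep ℂ G) : ℕ :=
  Module.finrank ℂ (Representation.invariants (V.ρ.comp H.subtype))

theorem finrankInvariants_le (H : Subgroup G) (V : FDRep ℂ G) :
    finrankInvariants H V ≤ Module.finrank ℂ V :=
  Submodule.finrank_le (Representation.invariants _)

theorem finrankInvariants_bot (V : FDRep ℂ G) :
    finrankInvariants ⊥ V = Module.finrank ℂ V := by
  have htop : Representation.invariants (V.ρ.comp (⊥ : Subgroup G).subtype) = ⊤ := by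
    ext v
    simp only [Submodule.mem_top, iff_true, Representation.mem_invariants]
    rintro ⟨h, hh⟩
    obtain rfl := Subgroup.mem_bot.mp hh
    simp
  rw [finrankInvariants, htop, finrank_top]

variable [Fintype G]

theorem simple_of_isIrreducible (V : FDRep ℂ G) [Representation.IsIrreducible V.ρ] : Simple V := by
  rw [simple_iff_end_is_rank_one, ← (forget₂HomLinearEquiv V V).finrank_eq,
    (Rep.homLinearEquiv _ _).finrank_eq]
  exact Representation.IsIrreducible.finrank_intertwiningMap_self V.ρ

theorem simple_trivial : Simple (FDRep.of (Representation.trivial ℂ G ℂ)) := by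
  simp [simple_iff_char_is_norm_one, character_trivial]

theorem sum_character_subgroup (H : Subgroup G) (V : FDRep ℂ G) :
    ∑ h : H, V.character h = Nat.card H * finrankInvariants H V := by
  have : Invertible (Nat.card H : ℂ) := invertibleOfNonzero (NeZero.ne _)
  rw [finrankInvariants, ← Representation.card_inv_mul_sum_char_eq_finrank, mul_inv_cancel_left₀
    (NeZero.ne _)]
  rfl

theorem sum_character_subgroup_ne_one (H : Subgroup G) (V : FDRep ℂ G) :
    ∑ h ∈ univ.filter (fun h : G => h ∈ H ∧ h ≠ 1), V.character h =
      Nat.card H * finrankInvariants H V - Module.finrank ℂ V := by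
  rw [H.sum_filter_mem_ne_one, sum_character_subgroup, char_one]

theorem sum_card_fixedBy_quotient_mul_character_inv (H : Subgroup G) (V : FDRep ℂ G) :
    ∑ g : G, (Nat.card (MulAction.fixedBy (G ⧸ H) g) : ℂ) * V.character g⁻¹ =
      Nat.card G * finrankInvariants H V := by
  have hfix : ∀ g : G, (Nat.card (MulAction.fixedBy (G ⧸ H) g) : ℂ) * V.character g⁻¹ =
      ∑ x : G ⧸ H, if g • x = x then V.character g⁻¹ else 0 := fun g => by
    rw [sum_ite, sum_const_zero, add_zero, sum_const, nsmul_eq_mul, Nat.card_eq_fintype_card,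
      Fintype.card_subtype]
    rfl
  have hclass : ∀ a g : G, V.character (a * g * a⁻¹)⁻¹ = V.character g⁻¹ := fun a g => by
    rw [mul_inv_rev, mul_inv_rev, inv_inv, ← mul_assoc, char_conj]
  have hinv : ∑ h : H, V.character (h : G)⁻¹ = ∑ h : H, V.character h :=
    Fintype.sum_equiv (Equiv.inv H) _ _ fun h => rfl
  simp_rw [hfix]
  rw [sum_comm]
  simp_rw [H.sum_ite_smul_eq_self_quotient (fun g => V.character g⁻¹) hclass, hinv,
    sum_character_subgroup]
  rw [sum_const, card_univ, nsmul_eq_mul, H.card_eq_card_quotient_mul_card_subgroup,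
    Nat.card_eq_fintype_card (α := G ⧸ H)]
  push_cast
  ring

end FDRep

namespace IsCompleteIrrepFamily

open FDRep

variable {G : Type} [Group G] [Fintype G] {ι : Type} {ρ : ι → FDRep ℂ G}

theorem exists_character_eq_one (hρ : IsCompleteIrrepFamily ρ) :
    ∃ i, ∀ g, (ρ i).character g = 1 := by
  obtain ⟨i, ⟨e⟩⟩ := hρ.2.2 _ simple_trivial
  exact ⟨i, fun g => by rw [char_iso e, character_trivial]⟩

theorem sum_character_mul_character_inv (hρ : IsCompleteIrrepFamily ρ) (i j : ι) :
    ∑ g : G, (ρ i).character g * (ρ j).character g⁻¹ = if i = j then (Nat.card G : ℂ) else 0 := by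
  have := hρ.1 i
  have := hρ.1 j
  have : Invertible (Nat.card G : ℂ) := invertibleOfNonzero (NeZero.ne _)
  have h := char_orthonormal (ρ i) (ρ j)
  rw [inv_mul_eq_iff_eq_mul₀ (NeZero.ne _)] at h
  rw [h]
  rcases eq_or_ne i j with rfl | hij
  · rw [if_pos ⟨Iso.refl _⟩, if_pos rfl, mul_one]
  · rw [if_neg fun e => hij (hρ.2.1 i j e), if_neg hij, mul_zero]

variable [Fintype ι]

theorem exists_character_eq_sum (hρ : IsCompleteIrrepFamily ρ) (V : FDRep ℂ G) :
    ∃ n : ι → ℕ, ∀ g, V.character g = ∑ i, (n i : ℂ) * (ρ i).character g := by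
  induction hV : Module.finrank ℂ V using Nat.strong_induction_on generalizing V with
  | _ N ih =>
  subst hV
  by_cases hirr : Representation.IsIrreducible V.ρ
  · obtain ⟨i, ⟨e⟩⟩ := hρ.2.2 V (simple_of_isIrreducible V)
    refine ⟨Pi.single i 1, fun g => ?_⟩
    simp [← char_iso e, Pi.single_apply]
  rcases subsingleton_or_nontrivial V with hV | hV
  · exact ⟨0, fun g => by simp [character, Subsingleton.elim (V.ρ g) 0]⟩
  have : Nontrivial (Subrepresentation V.ρ) :=
    ⟨⊥, ⊤, fun h => bot_ne_top (congrArg Subrepresentation.toSubmodule h)⟩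
  obtain ⟨σ, hσ_bot, hσ_top⟩ : ∃ σ : Subrepresentation V.ρ, σ ≠ ⊥ ∧ σ ≠ ⊤ := by
    by_contra! h
    exact hirr ⟨fun σ => (em (σ = ⊥)).imp_right (h σ)⟩
  -- Maschke: the lattice of subrepresentations is complemented.
  obtain ⟨τ, hστ⟩ := exists_isCompl σ
  have hτ_top : τ ≠ ⊤ := fun h => hσ_bot (eq_bot_of_isCompl_top (h ▸ hστ))
  obtain ⟨n, hn⟩ := ih _ (finrank_lt_of_ne_top hσ_top) (FDRep.of σ.toRepresentation) rfl
  obtain ⟨n', hn'⟩ := ih _ (finrank_lt_of_ne_top hτ_top) (FDRep.of τ.toRepresentation) rfl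
  refine ⟨n + n', fun g => ?_⟩
  have hsplit := Representation.character_eq_add_of_isCompl hστ g
  change V.character g = (FDRep.of σ.toRepresentation).character g
    + (FDRep.of τ.toRepresentation).character g at hsplit
  simp only [hsplit, hn, hn', Pi.add_apply, Nat.cast_add, add_mul, sum_add_distrib]

theorem sum_character_mul_character_inv_of_eq_sum (hρ : IsCompleteIrrepFamily ρ) {V : FDRep ℂ G}
    {n : ι → ℕ} (hn : ∀ g, V.character g = ∑ i, (n i : ℂ) * (ρ i).character g) (j : ι) :
    ∑ g : G, V.character g * (ρ j).character g⁻¹ = n j * Nat.card G := by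
  simp_rw [hn, sum_mul, mul_assoc]
  rw [sum_comm]
  simp_rw [← mul_sum, hρ.sum_character_mul_character_inv]
  simp

theorem card_fixedBy_quotient_eq_sum (hρ : IsCompleteIrrepFamily ρ) (H : Subgroup G) (g : G) :
    (Nat.card (MulAction.fixedBy (G ⧸ H) g) : ℂ) =
      ∑ i, (finrankInvariants H (ρ i) : ℂ) * (ρ i).character g := by
  obtain ⟨n, hn⟩ := hρ.exists_character_eq_sum (FDRep.of (Representation.ofMulAction ℂ G (G ⧸ H)))
  have hnm : ∀ j, n j = finrankInvariants H (ρ j) := fun j => by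
    have h := hρ.sum_character_mul_character_inv_of_eq_sum hn j
    simp only [character_ofMulAction] at h
    rw [sum_card_fixedBy_quotient_mul_character_inv, mul_comm] at h
    exact_mod_cast (mul_right_cancel₀ (NeZero.ne _) h).symm
  rw [← character_ofMulAction, hn]
  simp only [hnm]

theorem card_quotient_eq_sum (hρ : IsCompleteIrrepFamily ρ) (H : Subgroup G) :
    Nat.card (G ⧸ H) = ∑ i, finrankInvariants H (ρ i) * Module.finrank ℂ (ρ i) := by
  have h := hρ.card_fixedBy_quotient_eq_sum H 1
  simp only [MulAction.fixedBy_one_eq_univ, Nat.card_univ, char_one] at h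
  exact_mod_cast h

theorem card_eq_sum_finrank_mul_finrank (hρ : IsCompleteIrrepFamily ρ) :
    Nat.card G = ∑ i, Module.finrank ℂ (ρ i) * Module.finrank ℂ (ρ i) := by
  have h := hρ.card_quotient_eq_sum ⊥
  simp only [finrankInvariants_bot] at h
  rw [(⊥ : Subgroup G).card_eq_card_quotient_mul_card_subgroup, Subgroup.card_bot, mul_one, h]

theorem sum_card_fixedBy_filter_eq_sum (hρ : IsCompleteIrrepFamily ρ) (H : Subgroup G) :
    ∑ h ∈ univ.filter (fun h : G => h ∈ H ∧ h ≠ 1), (Nat.card (MulAction.fixedBy (G ⧸ H) h) : ℂ) =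
      ∑ i, (finrankInvariants H (ρ i) : ℂ) *
        (Nat.card H * finrankInvariants H (ρ i) - Module.finrank ℂ (ρ i)) := by
  simp_rw [hρ.card_fixedBy_quotient_eq_sum H]
  rw [sum_comm]
  simp_rw [← mul_sum, sum_character_subgroup_ne_one]

theorem exists_card_mul_finrankInvariants_lt (hρ : IsCompleteIrrepFamily ρ) {H : Subgroup G}
    (hH : H ≠ ⊥) : ∃ i, Nat.card H * finrankInvariants H (ρ i) < Module.finrank ℂ (ρ i) := by
  obtain ⟨i₀, hi₀⟩ := hρ.exists_character_eq_one
  have hd : Module.finrank ℂ (ρ i₀) = 1 := by exact_mod_cast (char_one _).symm.trans (hi₀ 1)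
  have hm : finrankInvariants H (ρ i₀) = 1 := by
    have h := sum_character_subgroup H (ρ i₀)
    simp only [hi₀, sum_const, card_univ, nsmul_eq_mul, mul_one, Fintype.card_eq_nat_card] at h
    exact_mod_cast (mul_left_cancel₀ (NeZero.ne _) ((mul_one _).trans h)).symm
  have hH : 1 < Nat.card H := (Subgroup.one_lt_card_iff_ne_bot H).mpr hH
  by_contra! hle
  have hlt : ∑ i, Module.finrank ℂ (ρ i) * Module.finrank ℂ (ρ i) <
      ∑ i, Nat.card H * (finrankInvariants H (ρ i) * Module.finrank ℂ (ρ i)) := by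
    refine sum_lt_sum (fun i _ => ?_) ⟨i₀, mem_univ _, by simpa [hd, hm] using hH⟩
    rw [← mul_assoc]
    exact Nat.mul_le_mul_right _ (hle i)
  rw [← mul_sum, ← hρ.card_quotient_eq_sum, ← hρ.card_eq_sum_finrank_mul_finrank,
    mul_comm, ← H.card_eq_card_quotient_mul_card_subgroup] at hlt
  exact lt_irrefl _ hlt

end IsCompleteIrrepFamily

theorem Finset.sum_mul_lt_sum_mul_abs {R ι : Type*} [Ring R] [LinearOrder R] [IsStrictOrderedRing R]
    {s : Finset ι} {m d a : ι → R} (hm : ∀ i ∈ s, 0 ≤ m i) (hmd : ∀ i ∈ s, m i ≤ d i)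
    {j : ι} (hj : j ∈ s) (haj : a j < 0) (hdj : 0 < d j) :
    ∑ i ∈ s, m i * a i < ∑ i ∈ s, d i * |a i| :=
  sum_lt_sum
    (fun i hi => (mul_le_mul_of_nonneg_left (le_abs_self _) (hm i hi)).trans
      (mul_le_mul_of_nonneg_right (hmd i hi) (abs_nonneg _)))
    ⟨j, hj, (mul_nonpos_of_nonneg_of_nonpos (hm j hj) haj.le).trans_lt
      (mul_pos hdj (abs_pos.mpr haj.ne))⟩

/-- lower bound on `D_H` via fixed points of elements of `H` acting
on the coset space `G/H`. -/
theorem stmt_3 {G : Type} [Group G] [Fintype G] {ι : Type} [Fintype ι]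
    (ρ : ι → FDRep ℂ G) (hρ : IsCompleteIrrepFamily ρ)
    (H : Subgroup G) (hH : H ≠ ⊥) :
    (Fintype.card G : ℝ)⁻¹ *
        ∑ h ∈ Finset.univ.filter (fun h : G => h ∈ H ∧ h ≠ 1),
          (Nat.card (MulAction.fixedBy (G ⧸ H) h) : ℝ)
      < weakDist ρ H := by
  set m : ι → ℕ := fun i => FDRep.finrankInvariants H (ρ i)
  set d : ι → ℕ := fun i => Module.finrank ℂ (ρ i)
  have hchar : ∀ i, ∑ h ∈ univ.filter (fun h : G => h ∈ H ∧ h ≠ 1), (ρ i).character h =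
      ((Nat.card H * m i - d i : ℝ) : ℂ) := fun i => by
    rw [FDRep.sum_character_subgroup_ne_one]
    push_cast
    rfl
  have hfix : ∑ h ∈ univ.filter (fun h : G => h ∈ H ∧ h ≠ 1),
      (Nat.card (MulAction.fixedBy (G ⧸ H) h) : ℝ) = ∑ i, m i * (Nat.card H * m i - d i : ℝ) :=
    Complex.ofReal_injective (by push_cast; exact hρ.sum_card_fixedBy_filter_eq_sum H)
  obtain ⟨j, hj⟩ := hρ.exists_card_mul_finrankInvariants_lt hH
  rw [weakDist, hfix]
  simp_rw [hchar, Complex.norm_real, Real.norm_eq_abs]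
  refine mul_lt_mul_of_pos_left (sum_mul_lt_sum_mul_abs (fun i _ => by positivity)
    (fun i _ => by exact_mod_cast FDRep.finrankInvariants_le H (ρ i)) (mem_univ j) ?_ ?_)
    (by positivity)
  · exact sub_neg.mpr (by exact_mod_cast hj)
  · exact_mod_cast (Nat.zero_le _).trans_lt hj
end

section
/- Let G be a finite group and H ≤ G a nontrivial normal subgroup. Then D_H > 1 − 1/|H|; in particular D_H ≥ 1/2. -/
/-!
For normal `H`, the operator `∑_{h ∈ H} V.ρ h` commutes with `G`, so on an irreducible `V`
it is a scalar `c` by Schur's lemma; it squares to `|H|` times itself, hence `c ∈ {0, |H|}`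
and `∑_{h ∈ H} χ_V(h) ∈ {0, |H| d_V}`. Removing the identity term,
`|∑_{h ∈ H, h ≠ 1} χ_V(h)| ≥ d_V` in both cases because `|H| ≥ 2`. Therefore
`D_H ≥ (1/|G|) ∑ d_ρ² ≥ 1`. The last inequality holds because `ℂ[G]` is semisimple: an element
acting as zero on every irreducible representation annihilates every simple left ideal, hence
is zero, so `ℂ[G] → ∏_ρ End(V_ρ)` is injective.
-/

open CategoryTheory Finset
open scoped Classical

universe u

open Module

theorem IsSemisimpleRing.eq_zero_of_forall_isSimpleModule_mem_annihilator {R : Type*} [Ring R]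
    [IsSemisimpleRing R] {a : R}
    (h : ∀ N : Submodule R R, IsSimpleModule R N → a ∈ N.annihilator) : a = 0 := by
  have : a ∈ (⊤ : Submodule R R).annihilator := by
    rw [← IsSemisimpleModule.sSup_simples_eq_top, sSup_eq_iSup', Submodule.annihilator_iSup]
    exact (Submodule.mem_iInf _).2 fun N => h N N.2
  simpa using Submodule.mem_annihilator.1 this 1 trivial

namespace Representation

open scoped MonoidAlgebra

variable {k G M : Type*} [Field k] [Monoid G] [AddCommGroup M] [Module k M] [Module k[G] M]
  [IsScalarTower k k[G] M]

theorem asAlgebraHom_ofModule'_apply (a : k[G]) (m : M) :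
    (ofModule' (k := k) (G := G) M).asAlgebraHom a m = a • m := by
  simp [asAlgebraHom, ofModule']

noncomputable def ofModule'AsModuleLinearEquiv :
    (ofModule' (k := k) (G := G) M).asModule ≃ₗ[k[G]] M :=
  { (ofModule' (k := k) (G := G) M).asModuleEquiv with
    map_smul' := fun a m => by
      simp only [AddHom.toFun_eq_coe, LinearMap.coe_toAddHom, LinearEquiv.coe_coe,
        asModuleEquiv_map_smul, asAlgebraHom_ofModule'_apply, RingHom.id_apply] }

theorem isIrreducible_ofModule' [IsSimpleModule k[G] M] :
    IsIrreducible (ofModule' (k := k) (G := G) M) :=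
  (irreducible_iff_isSimpleModule_asModule _).2
    (IsSimpleModule.congr ofModule'AsModuleLinearEquiv)

end Representation

namespace FDRep

theorem simple_of_isIrreducible_s6 {k G V : Type u} [Field k] [IsAlgClosed k] [CharZero k]
    [Group G] [Fintype G] [AddCommGroup V] [Module k V] [FiniteDimensional k V]
    (ρ : Representation k G V) [ρ.IsIrreducible] : Simple (FDRep.of ρ) := by
  have := invertibleOfNonzero (NeZero.ne (Nat.card G : k))
  rw [simple_iff_char_is_norm_one]
  have h := Representation.char_orthonormal ρ ρ
  rw [if_pos ⟨Representation.Equiv.refl ρ⟩, inv_mul_eq_one₀ (NeZero.ne _)] at h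
  exact h.symm

theorem exists_eq_smul_id_of_commute {k G : Type u} [Field k] [IsAlgClosed k] [Monoid G]
    (V : FDRep k G) [Simple V] (f : V →ₗ[k] V) (hf : ∀ g, Commute (V.ρ g) f) :
    ∃ c : k, f = c • LinearMap.id := by
  let φ : V ⟶ V :=
    ⟨FGModuleCat.ofHom f, fun g => by ext x; exact LinearMap.congr_fun (hf g).symm x⟩
  obtain ⟨c, hc⟩ := endomorphism_simple_eq_smul_id k φ
  exact ⟨c, congrArg (fun ψ : V ⟶ V => ψ.hom.hom.hom) hc.symm⟩

theorem asAlgebraHom_ρ_eq_zero_of_iso {k G : Type u} [CommRing k] [Monoid G] {V W : FDRep k G}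
    (e : V ≅ W) {a : MonoidAlgebra k G} (h : Representation.asAlgebraHom V.ρ a = 0) :
    Representation.asAlgebraHom W.ρ a = 0 := by
  have : Representation.asAlgebraHom W.ρ =
      (LinearEquiv.conjAlgEquiv k (isoToLinearEquiv e)).toAlgHom.comp
        (Representation.asAlgebraHom V.ρ) := by
    ext g : 2
    simp [Iso.conj_ρ e g]
  simp [this, h]

end FDRep

theorem IsCompleteIrrepFamily.card_le_sum_finrank_mul_finrank {G : Type} [Group G] [Fintype G]
    {ι : Type} [Fintype ι] {ρ : ι → FDRep ℂ G} (hρ : IsCompleteIrrepFamily ρ) :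
    Fintype.card G ≤ ∑ i, finrank ℂ (ρ i) * finrank ℂ (ρ i) := by
  let Φ : MonoidAlgebra ℂ G →ₗ[ℂ] (∀ i, Module.End ℂ (ρ i)) :=
    LinearMap.pi fun i => (Representation.asAlgebraHom (ρ i).ρ).toLinearMap
  have hΦ : Function.Injective Φ := by
    refine (injective_iff_map_eq_zero Φ).2 fun a ha => ?_
    refine IsSemisimpleRing.eq_zero_of_forall_isSimpleModule_mem_annihilator fun N _ => ?_
    let σ := Representation.ofModule' (k := ℂ) (G := G) N
    have : FiniteDimensional ℂ N := Module.Finite.trans (MonoidAlgebra ℂ G) _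
    have := Representation.isIrreducible_ofModule' (k := ℂ) (G := G) (M := N)
    obtain ⟨i, ⟨e⟩⟩ := hρ.2.2 _ (FDRep.simple_of_isIrreducible_s6 σ)
    have hσ : Representation.asAlgebraHom σ a = 0 :=
      FDRep.asAlgebraHom_ρ_eq_zero_of_iso e (congrFun ha i)
    refine Submodule.mem_annihilator.2 fun n hn => ?_
    simpa [σ, Representation.asAlgebraHom_ofModule'_apply] using
      congrArg Subtype.val (LinearMap.congr_fun hσ ⟨n, hn⟩)
  calc Fintype.card G = finrank ℂ (MonoidAlgebra ℂ G) := by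
        simp [(MonoidAlgebra.coeffLinearEquiv ℂ).finrank_eq]
    _ ≤ finrank ℂ (∀ i, Module.End ℂ (ρ i)) := LinearMap.finrank_le_finrank_of_injective hΦ
    _ = ∑ i, finrank ℂ (ρ i) * finrank ℂ (ρ i) := by
        simp [Module.finrank_pi_fintype, Module.finrank_linearMap]

theorem Subgroup.sum_filter_mem_and_ne_one {G M : Type*} [Group G] [Fintype G] [AddCommGroup M]
    (H : Subgroup G) [Fintype H] (f : G → M) :
    ∑ h ∈ univ.filter (fun h : G => h ∈ H ∧ h ≠ 1), f h = ∑ h : H, f h - f 1 := by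
  have : univ.filter (fun h : G => h ∈ H ∧ h ≠ 1) = (univ.filter (· ∈ H)).erase 1 := by
    ext; simp [and_comm]
  rw [this, eq_sub_iff_add_eq, sum_erase_add _ _ (by simp [H.one_mem])]
  exact Finset.sum_subtype _ (by simp) f

namespace FDRep

section Subgroup

variable {k G : Type u} [Field k] [Group G] (V : FDRep k G) (H : Subgroup G) [Fintype H]

theorem sum_ρ_subgroup_mul_of_mem {h₀ : G} (h₀H : h₀ ∈ H) :
    (∑ h : H, V.ρ h) * V.ρ h₀ = ∑ h : H, V.ρ h := by
  rw [Finset.sum_mul]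
  exact Fintype.sum_equiv (Equiv.mulRight ⟨h₀, h₀H⟩) _ _ fun h => by simp

theorem sum_ρ_subgroup_mul_self :
    (∑ h : H, V.ρ h) * (∑ h : H, V.ρ h) = Fintype.card H • ∑ h : H, V.ρ h := by
  rw [Finset.mul_sum, ← Finset.card_univ, ← Finset.sum_const]
  exact Finset.sum_congr rfl fun h _ => sum_ρ_subgroup_mul_of_mem V H h.2

theorem commute_ρ_sum_ρ_subgroup [H.Normal] (g : G) : Commute (V.ρ g) (∑ h : H, V.ρ h) := by
  simp only [Commute, SemiconjBy, Finset.mul_sum, Finset.sum_mul, ← map_mul]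
  exact Fintype.sum_equiv (MulAut.conjNormal g).toEquiv _ _ fun h => by
    simp [MulAut.conjNormal_apply, mul_assoc]

theorem sum_character_subgroup_eq_zero_or [IsAlgClosed k] [Simple V] [H.Normal] :
    ∑ h : H, V.character h = 0 ∨
      ∑ h : H, V.character h = Fintype.card H * finrank k V := by
  obtain ⟨c, hc⟩ := exists_eq_smul_id_of_commute V _ (commute_ρ_sum_ρ_subgroup V H)
  have htrace : ∑ h : H, V.character h = c * finrank k V := by
    simp [character, ← map_sum, hc]
  have : Nontrivial V := not_subsingleton_iff_nontrivial.1 fun _ =>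
    id_nonzero V (by ext x; exact Subsingleton.elim _ _)
  have hc2 : c * c = Fintype.card H * c := by
    obtain ⟨v, hv⟩ := exists_ne (0 : V)
    have := LinearMap.congr_fun (sum_ρ_subgroup_mul_self V H) v
    rw [hc] at this
    simp only [Module.End.mul_apply, LinearMap.smul_apply, LinearMap.id_apply, map_smul] at this
    rw [← Nat.cast_smul_eq_nsmul k, smul_smul, smul_smul, mul_comm _ c] at this
    exact smul_left_injective k hv this
  rcases mul_eq_zero.1 (show c * (c - Fintype.card H) = 0 by linear_combination hc2) with h | h
  · left; simp [htrace, h]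
  · right; rw [htrace, sub_eq_zero.1 h]

end Subgroup

theorem finrank_le_norm_sum_character_filter {G : Type} [Group G] [Fintype G] (V : FDRep ℂ G)
    [Simple V] {H : Subgroup G} [H.Normal] (hH : H ≠ ⊥) :
    (finrank ℂ V : ℝ) ≤ ‖∑ h ∈ univ.filter (fun h : G => h ∈ H ∧ h ≠ 1), V.character h‖ := by
  have hcard : (2 : ℝ) ≤ Fintype.card H := by
    exact_mod_cast Fintype.one_lt_card_iff_nontrivial.2 (H.nontrivial_iff_ne_bot.2 hH)
  rw [Subgroup.sum_filter_mem_and_ne_one, char_one]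
  rcases sum_character_subgroup_eq_zero_or V H with h | h <;> rw [h]
  · simp
  · rw [show (Fintype.card H * finrank ℂ V - finrank ℂ V : ℂ) =
        (((Fintype.card H - 1) * finrank ℂ V : ℝ) : ℂ) by push_cast; ring,
      Complex.norm_real, Real.norm_of_nonneg (mul_nonneg (by linarith) (Nat.cast_nonneg _))]
    nlinarith [(finrank ℂ V).cast_nonneg (α := ℝ)]

end FDRep

theorem IsCompleteIrrepFamily.one_le_weakDist {G : Type} [Group G] [Fintype G] {ι : Type}
    [Fintype ι] {ρ : ι → FDRep ℂ G} (hρ : IsCompleteIrrepFamily ρ) {H : Subgroup G} [H.Normal]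
    (hH : H ≠ ⊥) : 1 ≤ weakDist ρ H := by
  rw [weakDist, le_inv_mul_iff₀ (by exact_mod_cast Fintype.card_pos), mul_one]
  calc (Fintype.card G : ℝ) ≤ ∑ i, (finrank ℂ (ρ i) : ℝ) * finrank ℂ (ρ i) := by
        exact_mod_cast hρ.card_le_sum_finrank_mul_finrank
    _ ≤ _ := sum_le_sum fun i _ => by
        have := hρ.1 i
        gcongr
        exact FDRep.finrank_le_norm_sum_character_filter (ρ i) hH

/-- a nontrivial normal subgroup satisfies `D_H > 1 - 1/|H|`, and in
particular `D_H ≥ 1/2`. -/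
theorem stmt_6 {G : Type} [Group G] [Fintype G] {ι : Type} [Fintype ι]
    (ρ : ι → FDRep ℂ G) (hρ : IsCompleteIrrepFamily ρ)
    (H : Subgroup G) (hH : H ≠ ⊥) (hnormal : H.Normal) :
    1 - 1 / (Nat.card H : ℝ) < weakDist ρ H ∧ 1 / 2 ≤ weakDist ρ H := by
  have hD := hρ.one_le_weakDist hH
  have : 0 < 1 / (Nat.card H : ℝ) := one_div_pos.2 (by exact_mod_cast Nat.card_pos)
  constructor <;> linarith
end

section
/- Let G be a finite group and H ≤ G a nontrivial subgroup. Then D_H > 1/[G:H] − 1/|H|, where [G:H] is the index of H in G. (In particular, subgroups of small index are distinguishable by weak quantum Fourier sampling.) -/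
open CategoryTheory Finset
open scoped Classical

section Aux

open Module
set_option linter.unusedSectionVars false

variable {G : Type} [Group G] [Fintype G]

noncomputable def reg (G : Type) [Group G] [Fintype G] : Representation ℂ G (G → ℂ) where
  toFun g := LinearMap.funLeft ℂ ℂ (fun x => g⁻¹ * x)
  map_one' := by ext f x; simp [LinearMap.funLeft]
  map_mul' g h := by ext f x; simp [LinearMap.funLeft, mul_assoc]

noncomputable def subRep {V : Type} [AddCommGroup V] [Module ℂ V]
    (ρ : Representation ℂ G V) (p : Submodule ℂ V)
    (hp : ∀ (g : G), ∀ x ∈ p, ρ g x ∈ p) : Representation ℂ G p where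
  toFun g := (ρ g).restrict (hp g)
  map_one' := by ext x; simp
  map_mul' g h := by ext x; simp [LinearMap.restrict_apply]

noncomputable def subRepIncl {Y : FDRep ℂ G} (p : Submodule ℂ Y)
    (hp : ∀ (g : G), ∀ x ∈ p, Y.ρ g x ∈ p) :
    FDRep.of (subRep Y.ρ p hp) ⟶ Y where
  hom := FGModuleCat.ofHom p.subtype
  comm g := by ext x; rfl

lemma fdrep_hom_eq_zero_iff {Y X : FDRep ℂ G} (f : Y ⟶ X) :
    f = 0 ↔ (f.hom.hom.hom : Y →ₗ[ℂ] X) = 0 := by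
  constructor
  · rintro rfl; rfl
  · intro h; apply Action.Hom.ext; apply FGModuleCat.hom_ext; exact h

example {Y X : FDRep ℂ G} (f : Y ⟶ X) (g : G) :
    (f.hom.hom.hom : Y →ₗ[ℂ] X) ∘ₗ (Y.ρ g) = (X.ρ g) ∘ₗ (f.hom.hom.hom : Y →ₗ[ℂ] X) := by
  ext x
  have := f.comm g
  have h2 := congrArg (fun (φ : Y.V ⟶ X.V) => (φ.hom.hom : Y →ₗ[ℂ] X) x) this
  simpa using h2

lemma equivar {Y X : FDRep ℂ G} (f : Y ⟶ X) (g : G) (y : Y) :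
    (f.hom.hom.hom : Y →ₗ[ℂ] X) (Y.ρ g y) = X.ρ g ((f.hom.hom.hom : Y →ₗ[ℂ] X) y) := by
  have := f.comm g
  have h2 := congrArg (fun (φ : Y.V ⟶ X.V) => (φ.hom.hom : Y →ₗ[ℂ] X) y) this
  simpa using h2

lemma simple_of_submodules (X : FDRep ℂ G) (hnt : ∃ x : X, x ≠ 0)
    (hsub : ∀ p : Submodule ℂ X, (∀ (g : G), ∀ x ∈ p, X.ρ g x ∈ p) → p = ⊥ ∨ p = ⊤) :
    Simple X := by
  constructor
  intro Y f hm
  constructor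
  · intro hiso h0
    subst h0
    obtain ⟨x, hx⟩ := hnt
    have h1 : (𝟙 X : X ⟶ X) = 0 := by
      rw [← IsIso.inv_hom_id (0 : Y ⟶ X), Limits.comp_zero]
    have hx' : x = 0 := congrArg (fun (φ : X ⟶ X) => (φ.hom.hom.hom : X →ₗ[ℂ] X) x) h1
    exact hx hx'
  · intro hf0
    have hker : ∀ (g : G), ∀ x ∈ LinearMap.ker (f.hom.hom.hom : Y →ₗ[ℂ] X),
        Y.ρ g x ∈ LinearMap.ker (f.hom.hom.hom : Y →ₗ[ℂ] X) := by
      intro g x hx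
      simp only [LinearMap.mem_ker] at hx ⊢
      have h4 : (f.hom.hom.hom : Y →ₗ[ℂ] X) (Y.ρ g x) = X.ρ g ((f.hom.hom.hom : Y →ₗ[ℂ] X) x) := equivar f g x
      rw [show (f.hom.hom.hom : Y →ₗ[ℂ] X) x = 0 from hx] at h4
      simpa using h4
    have hinj : Function.Injective (f.hom.hom.hom : Y →ₗ[ℂ] X) := by
      rw [← LinearMap.ker_eq_bot]
      by_contra hk
      obtain ⟨x, hx, hx0⟩ := Submodule.exists_mem_ne_zero_of_ne_bot hk
      let ι := subRepIncl (LinearMap.ker (f.hom.hom.hom : Y →ₗ[ℂ] X)) hker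
      have h1 : ι ≫ f = (0 : FDRep.of (subRep Y.ρ _ hker) ⟶ Y) ≫ f := by
        apply Action.Hom.ext
        apply FGModuleCat.hom_ext
        apply LinearMap.ext
        rintro ⟨y, hy⟩
        show (f.hom.hom.hom : Y →ₗ[ℂ] X) y = (f.hom.hom.hom : Y →ₗ[ℂ] X) 0
        rw [map_zero]; exact hy
      have h2 := (cancel_mono f).mp h1
      have h3 := congrArg (fun (ψ : FDRep.of (subRep Y.ρ _ hker) ⟶ Y) =>
        (ψ.hom.hom.hom : _ →ₗ[ℂ] Y) ⟨x, hx⟩) h2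
      simp only at h3
      exact hx0 h3
    have hrange : ∀ (g : G), ∀ x ∈ LinearMap.range (f.hom.hom.hom : Y →ₗ[ℂ] X),
        X.ρ g x ∈ LinearMap.range (f.hom.hom.hom : Y →ₗ[ℂ] X) := by
      rintro g x ⟨y, rfl⟩
      exact ⟨Y.ρ g y, equivar f g y⟩
    have hsurj : Function.Surjective (f.hom.hom.hom : Y →ₗ[ℂ] X) := by
      rcases hsub _ hrange with h | h
      · exfalso
        apply hf0
        rw [fdrep_hom_eq_zero_iff]
        apply LinearMap.ext
        intro y
        have hy : (f.hom.hom.hom : Y →ₗ[ℂ] X) y ∈ LinearMap.range (f.hom.hom.hom : Y →ₗ[ℂ] X) := ⟨y, rfl⟩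
        rw [h] at hy
        simpa using hy
      · rw [← LinearMap.range_eq_top]; exact h
    let e := LinearEquiv.ofBijective (f.hom.hom.hom : Y →ₗ[ℂ] X) ⟨hinj, hsurj⟩
    have key : ∀ z, (f.hom.hom.hom : Y →ₗ[ℂ] X) (e.symm z) = z := fun z => e.apply_symm_apply z
    refine ⟨⟨⟨FGModuleCat.ofHom e.symm.toLinearMap, ?_⟩, ?_, ?_⟩⟩
    · intro g
      apply FGModuleCat.hom_ext
      apply LinearMap.ext
      intro x
      apply hinj
      show (f.hom.hom.hom : Y →ₗ[ℂ] X) (e.symm (X.ρ g x)) = (f.hom.hom.hom : Y →ₗ[ℂ] X) (Y.ρ g (e.symm x))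
      rw [key, equivar f g, key]
    · apply Action.Hom.ext
      apply FGModuleCat.hom_ext
      apply LinearMap.ext
      intro y
      show e.symm ((f.hom.hom.hom : Y →ₗ[ℂ] X) y) = y
      exact e.symm_apply_apply y
    · apply Action.Hom.ext
      apply FGModuleCat.hom_ext
      apply LinearMap.ext
      intro x
      show (f.hom.hom.hom : Y →ₗ[ℂ] X) (e.symm x) = x
      exact key x

noncomputable def trivRep (G : Type) [Group G] : FDRep ℂ G :=
  FDRep.of (Representation.trivial ℂ (G := G) (V := ℂ))

lemma trivRep_character (g : G) : (trivRep G).character g = 1 := by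
  show LinearMap.trace ℂ ℂ ((Representation.trivial ℂ (G := G) (V := ℂ)) g) = 1
  rw [show (Representation.trivial ℂ (G := G) (V := ℂ)) g = LinearMap.id from rfl]
  rw [show (LinearMap.id : ℂ →ₗ[ℂ] ℂ) = 1 from rfl, LinearMap.trace_one, Module.finrank_self]
  exact Nat.cast_one

lemma trivRep_finrank : Module.finrank ℂ (trivRep G) = 1 :=
  Module.finrank_self ℂ

lemma trivRep_simple : Simple (trivRep G) := by
  haveI : IsSimpleModule ℂ ℂ := (isSimpleModule_iff ..).mpr (is_simple_module_of_finrank_eq_one (Module.finrank_self ℂ))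
  apply simple_of_submodules
  · show ∃ x : ℂ, x ≠ 0
    exact ⟨(1 : ℂ), one_ne_zero⟩
  · show ∀ p : Submodule ℂ ℂ, _ → p = ⊥ ∨ p = ⊤
    intro p _
    exact eq_bot_or_eq_top p

variable (G) in
noncomputable def sumF : (G → ℂ) →ₗ[ℂ] ℂ where
  toFun f := ∑ x, f x
  map_add' f g := by simp [Finset.sum_add_distrib]
  map_smul' c f := by simp [Finset.mul_sum]

lemma reg_ker_mem (g : G) (f : G → ℂ) (hf : f ∈ LinearMap.ker (sumF G)) :
    reg G g f ∈ LinearMap.ker (sumF G) := by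
  simp only [LinearMap.mem_ker, sumF, LinearMap.coe_mk, AddHom.coe_mk] at hf ⊢
  have : ∑ x, (reg G g f) x = ∑ x, f x :=
    Fintype.sum_equiv (Equiv.mulLeft g⁻¹) _ _ (fun x => rfl)
  rw [this, hf]

lemma exists_nontrivial_simple (hcard : 1 < Fintype.card G) :
    ∃ X : FDRep ℂ G, Simple X ∧ IsEmpty (X ≅ trivRep G) := by
  haveI : Nontrivial G := Fintype.one_lt_card_iff_nontrivial.mp hcard
  classical
  -- the set of candidate submodules
  let S : Set (Submodule ℂ (G → ℂ)) :=
    {p | p ≤ LinearMap.ker (sumF G) ∧ p ≠ ⊥ ∧ ∀ g, ∀ x ∈ p, reg G g x ∈ p}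
  have hW : LinearMap.ker (sumF G) ∈ S := by
    refine ⟨le_rfl, ?_, fun g x hx => reg_ker_mem g x hx⟩
    obtain ⟨a, b, hab⟩ := exists_pair_ne G
    intro hbot
    have hmem : (Pi.single a 1 - Pi.single b 1 : G → ℂ) ∈ LinearMap.ker (sumF G) := by
      simp [sumF, Finset.sum_sub_distrib]
    rw [hbot] at hmem
    have := congrFun (Submodule.mem_bot ℂ |>.mp hmem) a
    simp [Pi.single_apply, hab, hab.symm] at this
  have hP : ∃ n, ∃ p ∈ S, Module.finrank ℂ p = n := ⟨_, _, hW, rfl⟩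
  obtain ⟨U, hUS, hUrank⟩ := Nat.find_spec hP
  have hmin : ∀ q ∈ S, Nat.find hP ≤ Module.finrank ℂ q := by
    intro q hq
    exact Nat.find_min' hP ⟨q, hq, rfl⟩
  obtain ⟨hUW, hUne, hUinv⟩ := hUS
  refine ⟨FDRep.of (subRep (reg G) U hUinv), ?_, ?_⟩
  · apply simple_of_submodules
    · show ∃ x : U, x ≠ 0
      obtain ⟨x, hx, hx0⟩ := Submodule.exists_mem_ne_zero_of_ne_bot hUne
      exact ⟨⟨x, hx⟩, fun h => hx0 (congrArg Subtype.val h)⟩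
    · show ∀ q : Submodule ℂ U, _ → q = ⊥ ∨ q = ⊤
      intro q hq
      rcases eq_or_ne q ⊥ with h | h
      · exact Or.inl h
      · refine Or.inr ?_
        have hq' : ∀ g : G, ∀ x ∈ q, (subRep (reg G) U hUinv) g x ∈ q := hq
        set q' : Submodule ℂ (G → ℂ) := q.map U.subtype with hq'def
        have hq'S : q' ∈ S := by
          refine ⟨le_trans (Submodule.map_subtype_le U q) hUW, ?_, ?_⟩
          · obtain ⟨x, hx, hx0⟩ := Submodule.exists_mem_ne_zero_of_ne_bot h
            refine Submodule.ne_bot_iff _ |>.mpr ⟨x, Submodule.mem_map_of_mem hx, ?_⟩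
            intro hc
            exact hx0 (Subtype.ext hc)
          · rintro g x ⟨y, hyq, rfl⟩
            exact ⟨(subRep (reg G) U hUinv) g y, hq' g y hyq, rfl⟩
        have e : q ≃ₗ[ℂ] q' :=
          Submodule.equivMapOfInjective U.subtype (Submodule.injective_subtype U) q
        have h1 : Module.finrank ℂ U ≤ Module.finrank ℂ q := by
          rw [hUrank, e.finrank_eq]
          exact hmin q' hq'S
        have h2 : Module.finrank ℂ q = Module.finrank ℂ U :=
          le_antisymm (Submodule.finrank_le q) h1
        exact Submodule.eq_top_of_finrank_eq h2
  · constructor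
    intro e
    have hconj := FDRep.Iso.conj_ρ e.symm
    obtain ⟨x, hx, hx0⟩ := Submodule.exists_mem_ne_zero_of_ne_bot hUne
    have hfix : ∀ g : G, reg G g x = x := by
      intro g
      have h1 : (FDRep.of (subRep (reg G) U hUinv)).ρ g =
          (FDRep.isoToLinearEquiv e.symm).conj ((trivRep G).ρ g) := hconj g
      have h2 : (trivRep G).ρ g = LinearMap.id := rfl
      rw [h2, LinearEquiv.conj_id] at h1
      have h3 : (subRep (reg G) U hUinv) g ⟨x, hx⟩ = ⟨x, hx⟩ := by
        rw [show (subRep (reg G) U hUinv) g = (FDRep.of (subRep (reg G) U hUinv)).ρ g from rfl, h1]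
        rfl
      exact congrArg Subtype.val h3
    have hconst : ∀ y : G, x y = x 1 := by
      intro y
      have h5 : (reg G y⁻¹) x 1 = x y := by
        show x ((y⁻¹)⁻¹ * 1) = x y
        rw [inv_inv, mul_one]
      rw [← h5, congrFun (hfix y⁻¹) 1]
    have hsum : (∑ y : G, x y) = 0 := hUW hx
    rw [Finset.sum_congr rfl (fun y _ => hconst y), Finset.sum_const] at hsum
    have hx1 : x 1 = 0 := by
      have hcard0 : (Fintype.card G : ℂ) ≠ 0 := Nat.cast_ne_zero.mpr Fintype.card_ne_zero
      simpa [Finset.card_univ, smul_eq_mul, hcard0] using hsum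
    apply hx0
    funext y
    show x y = 0
    rw [hconst y, hx1]

lemma simple_finrank_pos (V : FDRep ℂ G) (h : Simple V) : 0 < Module.finrank ℂ V := by
  by_contra h0
  push_neg at h0
  interval_cases h1 : Module.finrank ℂ V
  haveI : Subsingleton V := Module.finrank_zero_iff.mp h1
  haveI := h
  apply CategoryTheory.id_nonzero V
  apply Action.Hom.ext
  apply FGModuleCat.hom_ext
  apply LinearMap.ext
  intro x
  exact @Subsingleton.elim _ ‹Subsingleton (CoeSort.coe V)› _ _

lemma sum_char_eq_zero {V W : FDRep ℂ G} (hV : Simple V) (hW : Simple W)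
    (h : ¬ Nonempty (V ≅ W)) (hW1 : ∀ g : G, W.character g = 1) :
    ∑ g : G, V.character g = 0 := by
  haveI : Invertible (Fintype.card G : ℂ) :=
    invertibleOfNonzero (Nat.cast_ne_zero.mpr Fintype.card_ne_zero)
  haveI := hV; haveI := hW
  have hc : ((Fintype.card G : ℂ)) ≠ 0 := Nat.cast_ne_zero.mpr Fintype.card_ne_zero
  have key := FDRep.char_orthonormal V W
  rw [if_neg h] at key
  simp only [hW1, mul_one, Nat.cast_zero] at key
  have h2 := mul_eq_zero.mp key
  rcases h2 with h2 | h2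
  · exact absurd h2 (inv_ne_zero (Nat.cast_ne_zero.mpr Nat.card_pos.ne'))
  · exact h2

end Aux

/-- `D_H > 1/[G:H] - 1/|H|`; in particular subgroups of small index
are distinguishable by weak quantum Fourier sampling. -/

theorem stmt_7 {G : Type} [Group G] [Fintype G] {ι : Type} [Fintype ι]
    (ρ : ι → FDRep ℂ G) (hρ : IsCompleteIrrepFamily ρ)
    (H : Subgroup G) (hH : H ≠ ⊥) :
    1 / (H.index : ℝ) - 1 / (Nat.card H : ℝ) < weakDist ρ H := by
  classical
  obtain ⟨hsimp, hinjF, hcomp⟩ := hρ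
  obtain ⟨i₀, ⟨e₀⟩⟩ := hcomp (trivRep G) trivRep_simple
  have hchar₀ : ∀ g : G, (ρ i₀).character g = 1 := fun g => by
    rw [FDRep.char_iso e₀]; exact trivRep_character g
  have hrank₀ : Module.finrank ℂ (ρ i₀) = 1 := by
    rw [(FDRep.isoToLinearEquiv e₀).finrank_eq]; exact trivRep_finrank
  set n := Fintype.card G with hn
  set m := Nat.card H with hm
  have hm1 : 1 ≤ m := Nat.card_pos
  have hmn : m ≤ n := by
    rw [hm, hn, ← Nat.card_eq_fintype_card]
    exact Subgroup.card_le_card_group H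
  have hn0 : (0:ℝ) < n := by exact_mod_cast Fintype.card_pos
  have hm0 : (0:ℝ) < m := by exact_mod_cast hm1
  set s := Finset.univ.filter (fun h : G => h ∈ H ∧ h ≠ 1) with hs
  have hscard : s.card = m - 1 := by
    rw [hs]
    have hsplit : Finset.univ.filter (fun h : G => h ∈ H ∧ h ≠ 1)
        = (Finset.univ.filter (fun h : G => h ∈ H)).erase 1 := by
      ext x; simp [Finset.mem_erase, and_comm]
    rw [hsplit, Finset.card_erase_of_mem (by simp [H.one_mem]), ← Fintype.card_subtype]
    rw [hm, Nat.card_eq_fintype_card]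
  have hsum₀ : ∑ h ∈ s, (ρ i₀).character h = ((m - 1 : ℕ) : ℂ) := by
    rw [Finset.sum_congr rfl (fun h _ => hchar₀ h), Finset.sum_const, hscard]
    simp
  set t : ι → ℝ := fun i => (Module.finrank ℂ (ρ i) : ℝ) *
      ‖∑ h ∈ s, (ρ i).character h‖ with ht
  have htnn : ∀ i, 0 ≤ t i := fun i => by positivity
  have ht₀ : t i₀ = (m:ℝ) - 1 := by
    simp only [ht, hrank₀, hsum₀, Nat.cast_one, one_mul, Complex.norm_natCast]
    rw [Nat.cast_sub hm1]
    norm_num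
  have hwd : weakDist ρ H = (n:ℝ)⁻¹ * ∑ i, t i := rfl
  by_cases htop : H = ⊤
  · -- H = ⊤
    have hGnt : Nontrivial G := by
      by_contra hns
      rw [not_nontrivial_iff_subsingleton] at hns
      exact hH (Subsingleton.elim H ⊥)
    obtain ⟨X, hXs, hXni⟩ := exists_nontrivial_simple (G := G) Fintype.one_lt_card
    obtain ⟨j, ⟨ej⟩⟩ := hcomp X hXs
    have hji : j ≠ i₀ := by
      intro hji
      subst hji
      exact hXni.false (ej.symm.trans e₀)
    have hmn' : m = n := by
      rw [hm, htop, hn, ← Nat.card_eq_fintype_card]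
      exact Subgroup.card_top
    have hsj : ∑ h ∈ s, (ρ j).character h = -(Module.finrank ℂ (ρ j) : ℂ) := by
      have hserase : s = Finset.univ.erase 1 := by
        ext x; simp [hs, htop]
      rw [hserase, Finset.sum_erase_eq_sub (Finset.mem_univ 1)]
      rw [sum_char_eq_zero (hsimp j) (hsimp i₀) (fun ⟨e⟩ => hji (hinjF j i₀ ⟨e⟩)) hchar₀]
      rw [FDRep.char_one]
      ring
    have hdj : 1 ≤ Module.finrank ℂ (ρ j) := simple_finrank_pos _ (hsimp j)
    have hdjR : (1:ℝ) ≤ (Module.finrank ℂ (ρ j) : ℝ) := by exact_mod_cast hdj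
    have htj : t j = (Module.finrank ℂ (ρ j) : ℝ) * (Module.finrank ℂ (ρ j) : ℝ) := by
      simp [ht, hsj, Complex.norm_natCast]
    have hsum2 : t i₀ + t j ≤ ∑ i, t i := by
      rw [← Finset.sum_pair (Ne.symm hji)]
      exact Finset.sum_le_sum_of_subset_of_nonneg (Finset.subset_univ _) (fun i _ _ => htnn i)
    have hge1 : (1:ℝ) ≤ weakDist ρ H := by
      rw [hwd]
      have hnsum : (n:ℝ) ≤ ∑ i, t i := by
        nlinarith [hsum2, ht₀, htj, hdjR, hmn', (by exact_mod_cast hmn' : (m:ℝ) = (n:ℝ))]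
      calc (1:ℝ) = (n:ℝ)⁻¹ * n := by field_simp
        _ ≤ (n:ℝ)⁻¹ * ∑ i, t i := by
            apply mul_le_mul_of_nonneg_left hnsum (by positivity)
    have hidx1 : H.index = 1 := by rw [htop]; exact Subgroup.index_top
    rw [hidx1]
    have hminv : 0 < 1/(m:ℝ) := by positivity
    push_cast
    linarith
  · -- H ≠ ⊤
    have hmltn : m < n := by
      rcases lt_or_eq_of_le hmn with h | h
      · exact h
      · exact absurd (Subgroup.eq_top_of_card_eq H (by rw [← hm, h, hn, Nat.card_eq_fintype_card])) htop
    have hsingle : t i₀ ≤ ∑ i, t i := Finset.single_le_sum (fun i _ => htnn i) (Finset.mem_univ i₀)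
    have hge : ((m:ℝ)-1)/n ≤ weakDist ρ H := by
      rw [hwd]
      calc ((m:ℝ)-1)/n = (n:ℝ)⁻¹ * t i₀ := by rw [ht₀]; ring
        _ ≤ (n:ℝ)⁻¹ * ∑ i, t i := mul_le_mul_of_nonneg_left hsingle (by positivity)
    have hidx : ((H.index : ℝ)) * m = n := by
      have := Subgroup.index_mul_card H
      rw [← Nat.card_eq_fintype_card] at hn
      exact_mod_cast (by rw [hm, hn]; exact this : H.index * m = n)
    have hip : (0:ℝ) < H.index := by
      have := Subgroup.index_ne_zero_of_finite (H := H)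
      exact_mod_cast Nat.pos_of_ne_zero this
    have h1 : 1/(H.index:ℝ) = m/n := by
      rw [div_eq_div_iff hip.ne' hn0.ne']
      linarith [hidx]
    have h2 : (1:ℝ)/n < 1/m := one_div_lt_one_div_of_lt hm0 (by exact_mod_cast hmltn)
    have key : 1/(H.index:ℝ) - 1/(m:ℝ) < ((m:ℝ)-1)/n := by
      rw [h1]
      have h3 : ((m:ℝ)-1)/n = (m:ℝ)/n - 1/n := by ring
      rw [h3]
      linarith [h2]
    linarith
end

section
/- Let G be a finite group and H, K ≤ G subgroups. Then the following are equivalent: (i) for every conjugacy class C of G, |H ∩ C| = |K ∩ C|; (ii) for every g ∈ G, the number of fixed points of g acting on the coset space G/H equals the number of fixed points of g acting on the coset space G/K (equivalently, the permutation representations of G on G/H and on G/K give rise to equivalent linear representations). -/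
/-!
The cosets `xH` fixed by `g` are those with `x⁻¹gx ∈ H`, and by orbit–stabilizer for
conjugation the number of such `x` is `|C_G(g)| · |g^G ∩ H|`; hence
`|H| · |Fix_{G/H}(g)| = |C_G(g)| · |g^G ∩ H|`. Either condition forces `|H| = |K|`: summing
the class counts over all classes gives `|H|`, and `g = 1` fixes all `[G : H]` cosets.
The identity then turns each condition into the other.
-/

open CategoryTheory Finset
open scoped Classical

open MulAction in
theorem MulAction.card_smul_mem {G α : Type*} [Group G] [MulAction G α] (a : α) (s : Set α) :
    Nat.card {g : G | g • a ∈ s}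
      = Nat.card (stabilizer G a) * Nat.card (orbit G a ∩ s : Set α) := by
  have hrange : orbit G a ∩ s ⊆ Set.range (ofQuotientStabilizer G a) := by
    rintro _ ⟨⟨g, rfl⟩, -⟩
    exact ⟨g, rfl⟩
  rw [← Nat.card_preimage_of_injective (injective_ofQuotientStabilizer G a) hrange,
    ← QuotientGroup.card_preimage_mk]
  congr 2
  ext g
  simp [mem_orbit]

theorem card_eq_sum_card_inter_conjClasses {G : Type*} [Group G] [Fintype G] (s : Set G) :
    Nat.card s = ∑ c : ConjClasses G, Nat.card (c.carrier ∩ s : Set G) := by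
  rw [← Nat.card_congr (Equiv.sigmaPreimageEquiv fun x : s => ConjClasses.mk x.1), Nat.card_sigma]
  refine Finset.sum_congr rfl fun c _ => Nat.card_congr ?_
  exact {
    toFun := fun x => ⟨x.1.1, ConjClasses.mem_carrier_iff_mk_eq.mpr x.2, x.1.2⟩
    invFun := fun x => ⟨⟨x.1, x.2.2⟩, ConjClasses.mem_carrier_iff_mk_eq.mp x.2.1⟩
    left_inv := fun _ => rfl
    right_inv := fun _ => rfl }

theorem QuotientGroup.card_preimage_mk_fixedBy {G : Type*} [Group G] (H : Subgroup G) (g : G) :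
    Nat.card (QuotientGroup.mk ⁻¹' MulAction.fixedBy (G ⧸ H) g)
      = Nat.card {c : ConjAct G | c • g ∈ H} := by
  refine Nat.card_congr (Equiv.subtypeEquiv ((Equiv.inv G).trans ConjAct.toConjAct.toEquiv) ?_)
  intro x
  simp [MulAction.mem_fixedBy, ConjAct.smul_def, eq_comm (a := ((g * x : G) : G ⧸ H)),
    QuotientGroup.eq, mul_assoc]

theorem card_mul_card_fixedBy_quotient {G : Type*} [Group G] (H : Subgroup G) (g : G) :
    Nat.card H * Nat.card (MulAction.fixedBy (G ⧸ H) g)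
      = Nat.card (MulAction.stabilizer (ConjAct G) g)
          * Nat.card ((ConjClasses.mk g).carrier ∩ H : Set G) := by
  rw [← QuotientGroup.card_preimage_mk, QuotientGroup.card_preimage_mk_fixedBy,
    ← ConjAct.orbit_eq_carrier_conjClasses]
  exact MulAction.card_smul_mem g (H : Set G)

theorem Subgroup.card_eq_of_card_quotient_eq {G : Type*} [Group G] [Finite G] {H K : Subgroup G}
    (h : Nat.card (G ⧸ H) = Nat.card (G ⧸ K)) : Nat.card H = Nat.card K := by
  have hH := H.index_mul_card
  rw [← K.index_mul_card, Subgroup.index, Subgroup.index, h] at hH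
  exact Nat.eq_of_mul_eq_mul_left Nat.card_pos hH

/-- `H` and `K` intersect each conjugacy class in sets of equal size
iff every `g ∈ G` has the same number of fixed points on `G/H` as on `G/K`
(i.e. the permutation representations on `G/H` and `G/K` afford the same character). -/
theorem stmt_12 {G : Type} [Group G] [Fintype G] (H K : Subgroup G) :
    (∀ c : ConjClasses G,
        Nat.card (c.carrier ∩ (H : Set G) : Set G)
          = Nat.card (c.carrier ∩ (K : Set G) : Set G))
      ↔ ∀ g : G,
          Nat.card (MulAction.fixedBy (G ⧸ H) g) = Nat.card (MulAction.fixedBy (G ⧸ K) g) := by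
  constructor
  · intro hclass g
    have hcard : Nat.card H = Nat.card K := by
      rw [← SetLike.coe_sort_coe, ← SetLike.coe_sort_coe K, card_eq_sum_card_inter_conjClasses,
        card_eq_sum_card_inter_conjClasses]
      exact Finset.sum_congr rfl fun c _ => hclass c
    have h := card_mul_card_fixedBy_quotient H g
    rw [hclass, ← card_mul_card_fixedBy_quotient, hcard] at h
    exact Nat.eq_of_mul_eq_mul_left Nat.card_pos h
  · intro hfix c
    obtain ⟨g, rfl⟩ := c.exists_rep
    have hcard : Nat.card H = Nat.card K := by
      apply Subgroup.card_eq_of_card_quotient_eq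
      simpa only [MulAction.fixedBy_one_eq_univ, Nat.card_univ] using hfix 1
    have h := card_mul_card_fixedBy_quotient H g
    rw [hfix, hcard, card_mul_card_fixedBy_quotient] at h
    exact (Nat.eq_of_mul_eq_mul_left Nat.card_pos h).symm
end

section
/- There exist a finite group G and subgroups H, K ≤ G such that H and K are not conjugate in G, yet |H ∩ C| = |K ∩ C| for every conjugacy class C of G (and hence the weak Fourier sampling distributions of H and K coincide: D(H,K) = 0). -/
open CategoryTheory Finset
open scoped Classical

/-!
In a semidirect product `A ⋊ G` with `A` abelian, the complements `{(f g, g)}` of `A` correspond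
to 1-cocycles `f : G → A`, the zero cocycle giving `G` itself. Conjugating by `(b, 1)` shows that
`(0, g)` is conjugate to `(f g, g)` whenever `f g = g • x - x` for some `x`; so if `f` is a
coboundary at each element separately, the two complements are elementwise conjugate and meet
every conjugacy class equally often. On the other hand, if they are conjugate as subgroups then
`f` is a coboundary. For `A = ℤ/8` and `G = (ℤ/8)ˣ`, the cocycle with `f u = 2` for
`u ≡ 3 mod 4` and `f u = 0` otherwise is a coboundary pointwise but not globally.
-/

open groupCohomology

theorem isCocycle₁_zero {G A : Type*} [Monoid G] [AddCommGroup A] [DistribMulAction G A] :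
    IsCocycle₁ (0 : G → A) := fun _ _ => by simp

theorem natCard_conjClass_inter_eq_of_equiv {G : Type*} [Group G] {H K : Subgroup G}
    (e : H ≃ K) (he : ∀ h : H, IsConj (h : G) (e h)) (c : ConjClasses G) :
    Nat.card (c.carrier ∩ H : Set G) = Nat.card (c.carrier ∩ K : Set G) := by
  have inClass (L : Subgroup G) :
      (c.carrier ∩ L : Set G) ≃ {x : L // ConjClasses.mk (x : G) = c} :=
    ((Equiv.subtypeSubtypeEquivSubtypeInter (· ∈ L) (ConjClasses.mk · = c)).trans
      (Equiv.subtypeEquivRight fun x => by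
        rw [Set.mem_inter_iff, ConjClasses.mem_carrier_iff_mk_eq, and_comm]
        rfl)).symm
  refine Nat.card_congr ((inClass H).trans ((e.subtypeEquiv fun h => ?_).trans (inClass K).symm))
  rw [ConjClasses.mk_eq_mk_iff_isConj.mpr (he h)]

/-- The semidirect product `A ⋊ G`, with `(a, g) * (b, h) = (a + g • b, g * h)`. -/
@[ext]
structure SemidirectSum (A G : Type*) where
  left : A
  right : G

namespace SemidirectSum

variable {A G : Type*} [AddCommGroup A] [Group G]

instance : One (SemidirectSum A G) := ⟨⟨0, 1⟩⟩

theorem one_def : (1 : SemidirectSum A G) = ⟨0, 1⟩ := rfl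

variable [DistribMulAction G A]

instance : Mul (SemidirectSum A G) :=
  ⟨fun x y => ⟨x.left + x.right • y.left, x.right * y.right⟩⟩
instance : Inv (SemidirectSum A G) := ⟨fun x => ⟨-(x.right⁻¹ • x.left), x.right⁻¹⟩⟩

theorem mul_def (x y : SemidirectSum A G) :
    x * y = ⟨x.left + x.right • y.left, x.right * y.right⟩ := rfl

theorem inv_def (x : SemidirectSum A G) :
    x⁻¹ = ⟨-(x.right⁻¹ • x.left), x.right⁻¹⟩ := rfl

instance : Group (SemidirectSum A G) :=
  Group.ofLeftAxioms
    (fun x y z => by simp only [mul_def, smul_add, mul_smul, mul_assoc, add_assoc])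
    (fun x => by simp only [mul_def, one_def, one_smul, zero_add, one_mul])
    (fun x => by simp only [mul_def, inv_def, one_def, neg_add_cancel, inv_mul_cancel])

theorem mul_mul_inv (x y : SemidirectSum A G) :
    x * y * x⁻¹ = ⟨x.left + x.right • y.left - (x.right * y.right * x.right⁻¹) • x.left,
      x.right * y.right * x.right⁻¹⟩ := by
  simp only [mul_def, inv_def, smul_neg, mul_smul, sub_eq_add_neg]

theorem isConj_mk_mk {a a' x : A} {g : G} (h : g • x - x = a' - a) :
    IsConj (⟨a, g⟩ : SemidirectSum A G) ⟨a', g⟩ := by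
  refine isConj_iff.mpr ⟨⟨-x, 1⟩, ?_⟩
  rw [mul_mul_inv]
  simp only [one_smul, one_mul, mul_one, inv_one, smul_neg, mk.injEq, and_true]
  rw [sub_eq_iff_eq_add.mp h.symm]
  abel

def complement (f : G → A) (hf : IsCocycle₁ f) : Subgroup (SemidirectSum A G) where
  carrier := {x | x.left = f x.right}
  mul_mem' {x y} hx hy := by
    change x.left + x.right • y.left = f (x.right * y.right)
    rw [hx, hy, hf, add_comm]
  one_mem' := (map_one_of_isCocycle₁ hf).symm
  inv_mem' {x} hx := by
    change -(x.right⁻¹ • x.left) = f x.right⁻¹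
    have hinv := map_inv_of_isCocycle₁ hf x.right⁻¹
    rw [inv_inv] at hinv
    rw [hx, hinv, neg_neg]

theorem mem_complement {f : G → A} {hf : IsCocycle₁ f} {x : SemidirectSum A G} :
    x ∈ complement f hf ↔ x.left = f x.right := Iff.rfl

def complementEquiv (f : G → A) (hf : IsCocycle₁ f) : complement f hf ≃ G where
  toFun x := (x : SemidirectSum A G).right
  invFun g := ⟨⟨f g, g⟩, rfl⟩
  left_inv x := Subtype.ext (SemidirectSum.ext x.2.symm rfl)
  right_inv _ := rfl

theorem natCard_conjClass_inter_complement_eq {f : G → A} (hf : IsCocycle₁ f)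
    (hloc : ∀ g : G, ∃ x : A, g • x - x = f g) (c : ConjClasses (SemidirectSum A G)) :
    Nat.card (c.carrier ∩ complement (0 : G → A) isCocycle₁_zero : Set (SemidirectSum A G))
      = Nat.card (c.carrier ∩ complement f hf : Set (SemidirectSum A G)) := by
  refine natCard_conjClass_inter_eq_of_equiv
    ((complementEquiv 0 isCocycle₁_zero).trans (complementEquiv f hf).symm) (fun h => ?_) c
  obtain ⟨⟨a, g⟩, ha⟩ := h
  obtain ⟨x, hx⟩ := hloc g
  show IsConj (⟨a, g⟩ : SemidirectSum A G) ⟨f g, g⟩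
  exact isConj_mk_mk (by rw [hx, show a = 0 from ha, sub_zero])

theorem isCoboundary₁_of_map_conj_eq {f : G → A} (hf : IsCocycle₁ f) (y : SemidirectSum A G)
    (hy : (complement 0 isCocycle₁_zero).map (MulAut.conj y).toMonoidHom = complement f hf) :
    IsCoboundary₁ f := by
  refine ⟨-y.left, fun g => ?_⟩
  have hmem : y * ⟨0, y.right⁻¹ * g * y.right⟩ * y⁻¹ ∈ complement f hf :=
    hy ▸ Subgroup.mem_map_of_mem _
      (show (⟨0, y.right⁻¹ * g * y.right⟩ : SemidirectSum A G) ∈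
        complement 0 isCocycle₁_zero from rfl)
  rw [mem_complement, mul_mul_inv] at hmem
  simp only [smul_zero, add_zero, mul_assoc, mul_inv_cancel_left, mul_inv_cancel,
    mul_one] at hmem
  rw [← hmem, smul_neg]
  abel

instance [Fintype A] [Fintype G] : Fintype (SemidirectSum A G) :=
  Fintype.ofEquiv (A × G) ⟨fun p => ⟨p.1, p.2⟩, fun x => (x.left, x.right), fun _ => rfl,
    fun _ => rfl⟩

end SemidirectSum

open SemidirectSum

def mod4Cocycle (u : (ZMod 8)ˣ) : ZMod 8 := if (u : ZMod 8).val % 4 = 3 then 2 else 0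

theorem isCocycle₁_mod4Cocycle : IsCocycle₁ mod4Cocycle := by
  unfold IsCocycle₁
  decide

theorem mod4Cocycle_eq_smul_sub (u : (ZMod 8)ˣ) : ∃ x : ZMod 8, u • x - x = mod4Cocycle u := by
  revert u
  decide

/-- A coboundary `u ↦ u x - x` would need `4 x = 0` at `u = 5` and `6 x = 2` at `u = 7`. -/
theorem not_isCoboundary₁_mod4Cocycle : ¬ IsCoboundary₁ mod4Cocycle := by
  unfold IsCoboundary₁
  decide

/-- there exist a finite group `G` and non-conjugate subgroups
`H, K ≤ G` intersecting every conjugacy class of `G` in sets of equal size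
(hence with coinciding weak Fourier sampling distributions, `D(H,K) = 0`). -/
theorem stmt_13 :
    ∃ (G : Type) (_ : Group G) (_ : Fintype G) (H K : Subgroup G),
      (¬ ∃ g : G, Subgroup.map (MulAut.conj g).toMonoidHom H = K) ∧
        ∀ c : ConjClasses G,
          Nat.card (c.carrier ∩ (H : Set G) : Set G)
            = Nat.card (c.carrier ∩ (K : Set G) : Set G) :=
  ⟨SemidirectSum (ZMod 8) (ZMod 8)ˣ, inferInstance, inferInstance,
    complement 0 isCocycle₁_zero, complement mod4Cocycle isCocycle₁_mod4Cocycle,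
    fun ⟨y, hy⟩ => not_isCoboundary₁_mod4Cocycle (isCoboundary₁_of_map_conj_eq _ y hy),
    natCard_conjClass_inter_complement_eq _ mod4Cocycle_eq_smul_sub⟩
end

section
/- Let g ∈ S_n be a permutation with supp(g) = k, where supp(g) = n − (number of fixed points of g). Then the conjugacy class of g in S_n satisfies binom(n, k) ≤ |g^{S_n}| ≤ n^k. -/
/-!
Write the class of `g` as its orbit under conjugation, `σ • g = σ * g * σ⁻¹`, whose support is
`σ • supp g`. Since `Perm α` acts transitively on `k`-subsets, taking supports maps the class onto
the `k`-subsets, giving the lower bound. Conversely `σ • g` only depends on the restriction of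
`σ` to `supp g`, a map from a `k`-set to `α`, giving the upper bound.
-/

open Finset

namespace Equiv.Perm

variable {α : Type*} [Fintype α] [DecidableEq α]

theorem conj_eq_conj_of_eqOn_support {σ τ g : Perm α} (h : Set.EqOn σ τ g.support) :
    σ * g * σ⁻¹ = τ * g * τ⁻¹ := by
  have hdisj : (τ⁻¹ * σ).Disjoint g := fun x ↦ by
    by_cases hx : x ∈ g.support
    · exact .inl (by simp [h hx])
    · exact .inr (notMem_support.mp hx)
  calc σ * g * σ⁻¹ = τ * ((τ⁻¹ * σ) * g * (τ⁻¹ * σ)⁻¹) * τ⁻¹ := by group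
    _ = τ * g * τ⁻¹ := by rw [hdisj.commute.eq, mul_inv_cancel_right]

theorem choose_card_support_le_card_conjClass (g : Perm α) :
    (Fintype.card α).choose #g.support ≤ Nat.card (ConjClasses.mk g).carrier := by
  rw [← ConjAct.orbit_eq_carrier_conjClasses, ← Nat.card_eq_fintype_card,
    ← Set.powersetCard.card]
  let supportOf : MulAction.orbit (ConjAct (Perm α)) g → Set.powersetCard α #g.support :=
    fun x ↦ ⟨x.1.support, by
      obtain ⟨k, hk⟩ := x.2
      simp [← hk, support_conj_eq_smul_support]⟩
  refine Nat.card_le_card_of_surjective supportOf fun t ↦ ?_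
  have := Set.powersetCard.isPretransitive (α := α) (n := #g.support)
  obtain ⟨σ, hσ⟩ := MulAction.exists_smul_eq (Perm α) ⟨g.support, rfl⟩ t
  refine ⟨⟨ConjAct.toConjAct σ • g, MulAction.mem_orbit g _⟩, ?_⟩
  rw [← hσ]
  ext1
  simp [supportOf, support_toConjAct_eq_smul_support]

theorem card_conjClass_le_pow_card_support (g : Perm α) :
    Nat.card (ConjClasses.mk g).carrier ≤ Fintype.card α ^ #g.support := by
  let restrict : ConjAct (Perm α) → (g.support → α) := fun k x ↦ k.ofConjAct x
  have hfactors : (· • g).FactorsThrough restrict := fun k l hkl ↦ by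
    simp only [ConjAct.smul_def]
    exact conj_eq_conj_of_eqOn_support fun x hx ↦ congrFun hkl ⟨x, hx⟩
  have hrange : MulAction.orbit (ConjAct (Perm α)) g ⊆
      Set.range (Function.extend restrict (· • g) fun _ ↦ g) := by
    rintro _ ⟨k, rfl⟩
    exact ⟨restrict k, hfactors.extend_apply _ k⟩
  calc Nat.card (ConjClasses.mk g).carrier
      ≤ Nat.card (Set.range (Function.extend restrict (· • g) fun _ ↦ g)) := by
        rw [← ConjAct.orbit_eq_carrier_conjClasses]
        exact Nat.card_mono (Set.toFinite _) hrange
    _ ≤ Nat.card (g.support → α) := Finite.card_range_le _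
    _ = Fintype.card α ^ #g.support := by
        rw [Nat.card_eq_fintype_card, Fintype.card_fun, Fintype.card_coe]

end Equiv.Perm

/-- if `g ∈ S_n` has support of size `k` (i.e. `g` moves exactly `k`
points, fixing the other `n - k`), then `binom(n,k) ≤ |g^{S_n}| ≤ n^k`. -/
theorem stmt_14 {n k : ℕ} (g : Equiv.Perm (Fin n)) (hk : g.support.card = k) :
    n.choose k ≤ Nat.card (ConjClasses.mk g).carrier ∧
      Nat.card (ConjClasses.mk g).carrier ≤ n ^ k := by
  subst hk
  have hchoose := g.choose_card_support_le_card_conjClass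
  have hpow := g.card_conjClass_le_pow_card_support
  rw [Fintype.card_fin] at hchoose hpow
  exact ⟨hchoose, hpow⟩
end
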